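/- arXiv:2511.16613 — 13 statements merged into one kernel-verified Lean document; each statement's English description precedes it below -/
import Mathlib

section
/- Let a, b, n > 0 with a ≤ n and b ≤ n, and let γ ∈ (0,1]. Define f : [0,1] → ℝ by f(x) = x − (x + n/a − 1)^γ · (x + n/b − 1)^{1−γ} + (n/a)^γ · (n/b)^{1−γ} − 1. Then f(x) ≥ 0 for all x ∈ [0,1]. -/
set_option autoImplicit false

/-- Let `a, b, n > 0` with `a ≤ n`, `b ≤ n`, and `γ ∈ (0,1]`. Then
`f(x) = x − (x + n/a − 1)^γ (x + n/b − 1)^{1−γ} + (n/a)^γ (n/b)^{1−γ} − 1 ≥ 0`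
for all `x ∈ [0,1]`. Powers are real (`rpow`) powers. -/
theorem stmt_0 (a b n γ : ℝ) (ha : 0 < a) (hb : 0 < b) (hn : 0 < n)
    (han : a ≤ n) (hbn : b ≤ n) (hγ0 : 0 < γ) (hγ1 : γ ≤ 1)
    (x : ℝ) (hx0 : 0 ≤ x) (hx1 : x ≤ 1) :
    0 ≤ x - (x + n / a - 1) ^ γ * (x + n / b - 1) ^ (1 - γ)
        + (n / a) ^ γ * (n / b) ^ (1 - γ) - 1 := by
  set A := n / a with hAdef
  set B := n / b with hBdef
  have hA1 : (1 : ℝ) ≤ A := (one_le_div ha).mpr han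
  have hB1 : (1 : ℝ) ≤ B := (one_le_div hb).mpr hbn
  have hA0 : (0 : ℝ) < A := lt_of_lt_of_le one_pos hA1
  have hB0 : (0 : ℝ) < B := lt_of_lt_of_le one_pos hB1
  have hp0 : 0 ≤ x + A - 1 := by linarith
  have hq0 : 0 ≤ x + B - 1 := by linarith
  have hAB0 : 0 ≤ A ^ γ * B ^ (1 - γ) :=
    mul_nonneg (Real.rpow_nonneg hA0.le _) (Real.rpow_nonneg hB0.le _)
  have hAγ : A ^ γ ≠ 0 := ne_of_gt (Real.rpow_pos_of_pos hA0 _)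
  have hBγ : B ^ (1 - γ) ≠ 0 := ne_of_gt (Real.rpow_pos_of_pos hB0 _)
  -- Step 1: rewrite the product
  have h1 : (x + A - 1) ^ γ * (x + B - 1) ^ (1 - γ)
      = A ^ γ * B ^ (1 - γ) * (((x + A - 1) / A) ^ γ * ((x + B - 1) / B) ^ (1 - γ)) := by
    rw [Real.div_rpow hp0 hA0.le, Real.div_rpow hq0 hB0.le]
    field_simp
  -- Step 2: AM-GM
  have h2 : ((x + A - 1) / A) ^ γ * ((x + B - 1) / B) ^ (1 - γ)
      ≤ γ * ((x + A - 1) / A) + (1 - γ) * ((x + B - 1) / B) :=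
    Real.geom_mean_le_arith_mean2_weighted hγ0.le (by linarith)
      (div_nonneg hp0 hA0.le) (div_nonneg hq0 hB0.le) (by ring)
  have h3 : γ * ((x + A - 1) / A) + (1 - γ) * ((x + B - 1) / B)
      = 1 + (x - 1) * (γ / A + (1 - γ) / B) := by
    field_simp
    ring
  -- Step 3: coefficient ≥ 1
  set r := B / A with hrdef
  have hr0 : (0 : ℝ) < r := div_pos hB0 hA0
  have e1 : A ^ γ * B ^ (1 - γ) / A = r ^ (1 - γ) := by
    rw [hrdef, Real.div_rpow hB0.le hA0.le]
    rw [show (1 : ℝ) - γ = 1 - γ from rfl]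
    have : A ^ (1 - γ) = A / A ^ γ := by
      rw [eq_div_iff hAγ, ← Real.rpow_add hA0]; norm_num
    rw [this]
    field_simp
  have e2 : A ^ γ * B ^ (1 - γ) / B = r ^ (-γ) := by
    have hBg : B ^ γ ≠ 0 := ne_of_gt (Real.rpow_pos_of_pos hB0 _)
    have hB1γ : B ^ (1 - γ) = B / B ^ γ := by
      rw [eq_div_iff hBg, ← Real.rpow_add hB0]; norm_num
    rw [Real.rpow_neg hr0.le, hrdef, Real.div_rpow hB0.le hA0.le, hB1γ]
    field_simp
  have hC1 : 1 ≤ A ^ γ * B ^ (1 - γ) * (γ / A + (1 - γ) / B) := by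
    have expand : A ^ γ * B ^ (1 - γ) * (γ / A + (1 - γ) / B)
        = γ * (A ^ γ * B ^ (1 - γ) / A) + (1 - γ) * (A ^ γ * B ^ (1 - γ) / B) := by ring
    rw [expand, e1, e2]
    have amgm : (r ^ (1 - γ)) ^ γ * (r ^ (-γ)) ^ (1 - γ)
        ≤ γ * r ^ (1 - γ) + (1 - γ) * r ^ (-γ) :=
      Real.geom_mean_le_arith_mean2_weighted hγ0.le (by linarith)
        (Real.rpow_nonneg hr0.le _) (Real.rpow_nonneg hr0.le _) (by ring)
    have one_eq : (r ^ (1 - γ)) ^ γ * (r ^ (-γ)) ^ (1 - γ) = 1 := by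
      rw [← Real.rpow_mul hr0.le, ← Real.rpow_mul hr0.le, ← Real.rpow_add hr0]
      rw [show (1 - γ) * γ + -γ * (1 - γ) = 0 by ring, Real.rpow_zero]
    linarith [amgm, one_eq ▸ amgm]
  -- Combine
  have key : (x + A - 1) ^ γ * (x + B - 1) ^ (1 - γ) ≤ A ^ γ * B ^ (1 - γ) + (x - 1) := by
    rw [h1]
    have step : A ^ γ * B ^ (1 - γ) * (((x + A - 1) / A) ^ γ * ((x + B - 1) / B) ^ (1 - γ))
        ≤ A ^ γ * B ^ (1 - γ) * (1 + (x - 1) * (γ / A + (1 - γ) / B)) := by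
      apply mul_le_mul_of_nonneg_left _ hAB0
      rw [← h3]; exact h2
    have step2 : A ^ γ * B ^ (1 - γ) * (1 + (x - 1) * (γ / A + (1 - γ) / B))
        = A ^ γ * B ^ (1 - γ) + (x - 1) * (A ^ γ * B ^ (1 - γ) * (γ / A + (1 - γ) / B)) := by
      ring
    nlinarith [step, hC1, hx1]
  linarith [key]
end

section
/- Let n be a positive integer and let a, b be reals with 0 < b < a < n. Let m₁, m₃ be positive integers with m₁ ≤ m₃, set β := m₃/n, α := m₁/n and γ := α/β = m₁/m₃, and assume β ≤ 1. Let B₁ ~ Binomial(m₁, a/n), B₂ ~ Binomial(m₃ − m₁, b/n), and B₃ ~ Binomial(m₃, b/n) be independent random variables, and set X := B₁ + B₂ − B₃ (an integer-valued random variable). Define ã := a^γ · b^{1−γ}, b̃ := b, C̃ := (√ã − √b̃)², and R(p,q) := p(1−q)/(q(1−p)) for p, q ∈ (0,1). Then for every real θ, Pr[X ≤ θ] ≤ exp(−β·C̃ + (θ/2)·log R(ã/n, b̃/n)). -/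
/-!
Chernoff: for `t ≥ 0`, `P[X ≤ θ] ≤ e^{tθ} E[e^{-tX}]`, and with `s = e^{-t}` independence factors
`E[e^{-tX}]` into the binomial generating functions
`(1 - p + p s)^{m₁} (1 - q + q s)^{m₃ - m₁} (1 - q + q / s)^{m₃}`, where `p = a/n`, `q = b/n`.
Weighted AM-GM merges the first two factors into `(1 - p̃ + p̃ s)^{m₃}` with
`p̃ = p^γ q^{1-γ} = ã/n`. At the optimal point `s = √(q(1 - p̃) / (p̃(1 - q))) = R(p̃, q)^{-1/2}` the
product `(1 - p̃ + p̃ s)(1 - q + q / s)` is the squared Bhattacharyya coefficient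
`(√(p̃ q) + √((1 - p̃)(1 - q)))²`, which is at most `exp (-(√p̃ - √q)²)`.
-/

open Real MeasureTheory ProbabilityTheory
open scoped ENNReal

lemma rpow_mul_rpow_one_sub_mem_Icc {p q γ : ℝ} (hq : 0 ≤ q) (hqp : q ≤ p)
    (hγ0 : 0 ≤ γ) (hγ1 : γ ≤ 1) : p ^ γ * q ^ (1 - γ) ∈ Set.Icc q p := by
  have hp : 0 ≤ p := hq.trans hqp
  constructor
  · calc q = q ^ γ * q ^ (1 - γ) := by rw [← rpow_add_of_nonneg hq hγ0 (by linarith)]; simp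
      _ ≤ p ^ γ * q ^ (1 - γ) := by gcongr
  · calc p ^ γ * q ^ (1 - γ) ≤ p ^ γ * p ^ (1 - γ) := by gcongr
      _ = p := by rw [← rpow_add_of_nonneg hp hγ0 (by linarith)]; simp

lemma binomial_pgf_rpow_mul_rpow_le {p q γ s : ℝ} (hp0 : 0 ≤ p) (hp1 : p ≤ 1) (hq0 : 0 ≤ q)
    (hq1 : q ≤ 1) (hγ0 : 0 ≤ γ) (hγ1 : γ ≤ 1) (hs0 : 0 ≤ s) (hs1 : s ≤ 1) :
    (1 - p + p * s) ^ γ * (1 - q + q * s) ^ (1 - γ) ≤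
      1 - p ^ γ * q ^ (1 - γ) + p ^ γ * q ^ (1 - γ) * s := by
  have hpgf := geom_mean_le_arith_mean2_weighted hγ0 (sub_nonneg.2 hγ1)
    (by nlinarith : 0 ≤ 1 - p + p * s) (by nlinarith : 0 ≤ 1 - q + q * s) (add_sub_cancel γ 1)
  have hmean := geom_mean_le_arith_mean2_weighted hγ0 (sub_nonneg.2 hγ1) hp0 hq0
    (add_sub_cancel γ 1)
  nlinarith [mul_le_mul_of_nonneg_left hmean (sub_nonneg.2 hs1)]

lemma binomial_pgf_mul_pgf_inv_eq {p q : ℝ} (hp0 : 0 < p) (hp1 : p < 1) (hq0 : 0 < q)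
    (hq1 : q < 1) :
    (1 - p + p * √(q * (1 - p) / (p * (1 - q)))) * (1 - q + q / √(q * (1 - p) / (p * (1 - q))))
      = (√p * √q + √(1 - p) * √(1 - q)) ^ 2 := by
  obtain ⟨x, hx0, rfl⟩ : ∃ x, 0 < x ∧ x ^ 2 = p := ⟨√p, by positivity, sq_sqrt hp0.le⟩
  obtain ⟨y, hy0, rfl⟩ : ∃ y, 0 < y ∧ y ^ 2 = q := ⟨√q, by positivity, sq_sqrt hq0.le⟩
  obtain ⟨x', hx'0, hx'⟩ : ∃ x', 0 < x' ∧ x' ^ 2 = 1 - x ^ 2 :=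
    ⟨√(1 - x ^ 2), sqrt_pos.2 (by linarith), sq_sqrt (by linarith)⟩
  obtain ⟨y', hy'0, hy'⟩ : ∃ y', 0 < y' ∧ y' ^ 2 = 1 - y ^ 2 :=
    ⟨√(1 - y ^ 2), sqrt_pos.2 (by linarith), sq_sqrt (by linarith)⟩
  rw [← hx', ← hy']
  have hu : √(y ^ 2 * x' ^ 2 / (x ^ 2 * y' ^ 2)) = y * x' / (x * y') := by
    rw [show y ^ 2 * x' ^ 2 / (x ^ 2 * y' ^ 2) = (y * x' / (x * y')) ^ 2 by ring,
      sqrt_sq (by positivity)]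
  rw [hu, sqrt_sq hx0.le, sqrt_sq hy0.le, sqrt_sq hx'0.le, sqrt_sq hy'0.le]
  field_simp
  ring

lemma sq_sqrt_mul_add_sqrt_mul_le_exp {p q : ℝ} (hp0 : 0 ≤ p) (hp1 : p ≤ 1) (hq0 : 0 ≤ q)
    (hq1 : q ≤ 1) :
    (√p * √q + √(1 - p) * √(1 - q)) ^ 2 ≤ exp (-(√p - √q) ^ 2) := by
  set D := (√p - √q) ^ 2
  -- `2 (√p √q + √(1-p) √(1-q)) = 2 - (√p - √q)² - (√(1-p) - √(1-q))²`
  have hS : √p * √q + √(1 - p) * √(1 - q) ≤ 1 - D / 2 := by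
    nlinarith [sq_sqrt hp0, sq_sqrt hq0, sq_sqrt (sub_nonneg.2 hp1), sq_sqrt (sub_nonneg.2 hq1),
      sq_nonneg (√(1 - p) - √(1 - q))]
  calc (√p * √q + √(1 - p) * √(1 - q)) ^ 2 ≤ (1 - D / 2) ^ 2 := by gcongr
    _ ≤ exp (-(D / 2)) ^ 2 := by
        gcongr
        · exact (by positivity : (0:ℝ) ≤ _).trans hS
        · linarith [add_one_le_exp (-(D / 2))]
    _ = exp (-D) := by rw [← exp_nat_mul]; ring_nf

lemma binomial_pgf_pow_mul_pow_le {p q s : ℝ} (hp0 : 0 ≤ p) (hp1 : p ≤ 1) (hq0 : 0 ≤ q)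
    (hq1 : q ≤ 1) (hs0 : 0 ≤ s) (hs1 : s ≤ 1) {m₁ m₃ : ℕ} (hm : m₁ ≤ m₃) :
    (1 - p + p * s) ^ m₁ * (1 - q + q * s) ^ (m₃ - m₁) ≤
      (1 - p ^ ((m₁ : ℝ) / m₃) * q ^ (1 - (m₁ : ℝ) / m₃) +
        p ^ ((m₁ : ℝ) / m₃) * q ^ (1 - (m₁ : ℝ) / m₃) * s) ^ m₃ := by
  set γ : ℝ := m₁ / m₃
  have hγm₁ : γ * m₃ = m₁ := div_mul_cancel_of_imp fun h ↦ by simp_all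
  have hγm₂ : (1 - γ) * m₃ = (m₃ - m₁ : ℕ) := by rw [Nat.cast_sub hm, sub_mul, one_mul, hγm₁]
  have hγ1 : γ ≤ 1 := div_le_one_of_le₀ (by exact_mod_cast hm) (by positivity)
  calc (1 - p + p * s) ^ m₁ * (1 - q + q * s) ^ (m₃ - m₁)
      = ((1 - p + p * s) ^ γ * (1 - q + q * s) ^ (1 - γ)) ^ m₃ := by
        rw [mul_pow, ← rpow_mul_natCast (by nlinarith), ← rpow_mul_natCast (by nlinarith), hγm₁,
          hγm₂, rpow_natCast, rpow_natCast]
    _ ≤ _ := by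
        gcongr
        exact binomial_pgf_rpow_mul_rpow_le hp0 hp1 hq0 hq1 (by positivity) hγ1 hs0 hs1

lemma binomial_pgf_product_le_exp {p q p' s : ℝ} (hq0 : 0 < q) (hqp : q ≤ p) (hp1 : p < 1)
    {m₁ m₃ : ℕ} (hm : m₁ ≤ m₃) (hp' : p' = p ^ ((m₁ : ℝ) / m₃) * q ^ (1 - (m₁ : ℝ) / m₃))
    (hs : s = √(q * (1 - p') / (p' * (1 - q)))) :
    (1 - p + p * s) ^ m₁ * (1 - q + q * s) ^ (m₃ - m₁) * (1 - q + q / s) ^ m₃ ≤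
      exp (-(m₃ * (√p' - √q) ^ 2)) := by
  obtain ⟨hqp', hp'p⟩ : p' ∈ Set.Icc q p := hp' ▸ rpow_mul_rpow_one_sub_mem_Icc hq0.le hqp
    (by positivity) (div_le_one_of_le₀ (by exact_mod_cast hm) (by positivity))
  have hp'0 : 0 < p' := hq0.trans_le hqp'
  have hs0 : 0 < s := hs ▸ sqrt_pos.2 (div_pos (by nlinarith) (by nlinarith))
  have hs1 : s ≤ 1 := hs ▸ sqrt_le_one.2 ((div_le_one (by nlinarith)).2 (by nlinarith))
  calc (1 - p + p * s) ^ m₁ * (1 - q + q * s) ^ (m₃ - m₁) * (1 - q + q / s) ^ m₃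
      ≤ (1 - p' + p' * s) ^ m₃ * (1 - q + q / s) ^ m₃ := by
        gcongr
        · exact pow_nonneg (by linarith [div_pos hq0 hs0]) _
        · exact hp' ▸ binomial_pgf_pow_mul_pow_le (by linarith) hp1.le hq0.le (by linarith)
            hs0.le hs1 hm
    _ = ((√p' * √q + √(1 - p') * √(1 - q)) ^ 2) ^ m₃ := by
        rw [← mul_pow, hs, binomial_pgf_mul_pgf_inv_eq hp'0 (by linarith) hq0 (by linarith)]
    _ ≤ exp (-(√p' - √q) ^ 2) ^ m₃ := by
        gcongr
        exact sq_sqrt_mul_add_sqrt_mul_le_exp hp'0.le (by linarith) hq0.le (by linarith)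
    _ = exp (-(m₃ * (√p' - √q) ^ 2)) := by rw [← exp_nat_mul]; ring_nf

lemma rpow_mul_rpow_one_sub_div {x y c : ℝ} (hx : 0 ≤ x) (hy : 0 ≤ y) (hc : 0 < c) (γ : ℝ) :
    x ^ γ * y ^ (1 - γ) / c = (x / c) ^ γ * (y / c) ^ (1 - γ) := by
  rw [div_rpow hx hc.le, div_rpow hy hc.le, div_mul_div_comm, ← rpow_add hc, add_sub_cancel,
    rpow_one]

lemma exp_neg_log_div_two {x : ℝ} (hx : 0 < x) : exp (-(log x / 2)) = √x⁻¹ := by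
  rw [sqrt_eq_rpow, rpow_def_of_pos (inv_pos.2 hx), log_inv]
  ring_nf

def HasBinomialLaw {Ω : Type*} [MeasurableSpace Ω] (μ : Measure Ω) (B : Ω → ℕ) (m : ℕ) (p : ℝ) :
    Prop :=
  ∀ j : ℕ, μ {ω | B ω = j} = ENNReal.ofReal (m.choose j * p ^ j * (1 - p) ^ (m - j))

lemma tsum_ofReal_pow_mul_binomial (m : ℕ) {p r : ℝ} (hp0 : 0 ≤ p) (hp1 : p ≤ 1) (hr : 0 ≤ r) :
    ∑' j : ℕ, ENNReal.ofReal (r ^ j) * ENNReal.ofReal (m.choose j * p ^ j * (1 - p) ^ (m - j)) =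
      ENNReal.ofReal ((1 - p + p * r) ^ m) := by
  have h1p : 0 ≤ 1 - p := sub_nonneg.2 hp1
  rw [tsum_eq_sum (s := Finset.range (m + 1)) fun j hj ↦ by
    simp [Nat.choose_eq_zero_of_lt (by simpa using hj : m < j)]]
  simp_rw [← ENNReal.ofReal_mul (pow_nonneg hr _)]
  rw [← ENNReal.ofReal_sum_of_nonneg fun j _ ↦ by positivity,
    show 1 - p + p * r = p * r + (1 - p) by ring, add_pow]
  congr 1
  refine Finset.sum_congr rfl fun j _ ↦ ?_
  ring

section

variable {Ω : Type*} [MeasurableSpace Ω] {μ : Measure Ω}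

lemma lintegral_comp_eq_tsum {α : Type*} [MeasurableSpace α] [Countable α]
    [MeasurableSingletonClass α] {B : Ω → α} (hB : Measurable B) (g : α → ℝ≥0∞) :
    ∫⁻ ω, g (B ω) ∂μ = ∑' j, g j * μ {ω | B ω = j} := by
  rw [← lintegral_map (measurable_of_countable g) hB, lintegral_countable']
  refine tsum_congr fun j ↦ ?_
  rw [Measure.map_apply hB (measurableSet_singleton j)]
  rfl

lemma HasBinomialLaw.lintegral_ofReal_pow {B : Ω → ℕ} {m : ℕ} {p : ℝ}
    (hlaw : HasBinomialLaw μ B m p) (hB : Measurable B) (hp0 : 0 ≤ p) (hp1 : p ≤ 1) {r : ℝ}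
    (hr : 0 ≤ r) :
    ∫⁻ ω, ENNReal.ofReal (r ^ B ω) ∂μ = ENNReal.ofReal ((1 - p + p * r) ^ m) := by
  rw [lintegral_comp_eq_tsum hB fun j ↦ ENNReal.ofReal (r ^ j)]
  exact (tsum_congr fun j ↦ by rw [hlaw j]).trans (tsum_ofReal_pow_mul_binomial m hp0 hp1 hr)

lemma lintegral_mul_mul_eq_of_iIndepFun {β : Type*} [MeasurableSpace β] {B₁ B₂ B₃ : Ω → β}
    (hindep : iIndepFun ![B₁, B₂, B₃] μ) (hB₁ : Measurable B₁) (hB₂ : Measurable B₂)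
    (hB₃ : Measurable B₃) {g₁ g₂ g₃ : β → ℝ≥0∞} (hg₁ : Measurable g₁) (hg₂ : Measurable g₂)
    (hg₃ : Measurable g₃) :
    ∫⁻ ω, g₁ (B₁ ω) * g₂ (B₂ ω) * g₃ (B₃ ω) ∂μ =
      (∫⁻ ω, g₁ (B₁ ω) ∂μ) * (∫⁻ ω, g₂ (B₂ ω) ∂μ) * ∫⁻ ω, g₃ (B₃ ω) ∂μ := by
  have hg : ∀ i, Measurable (![g₁, g₂, g₃] i) := by
    intro i; fin_cases i <;> assumption
  have hB : ∀ i, Measurable (![B₁, B₂, B₃] i) := by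
    intro i; fin_cases i <;> assumption
  have := lintegral_prod_eq_prod_lintegral_of_indepFun Finset.univ _ (hindep.comp _ hg)
    fun i ↦ (hg i).comp (hB i)
  simpa [Fin.prod_univ_three, mul_assoc] using this

lemma measure_le_le_exp_mul_lintegral {X : Ω → ℝ} (hX : Measurable X) {t : ℝ} (ht : 0 ≤ t)
    (θ : ℝ) :
    μ {ω | X ω ≤ θ} ≤
      ENNReal.ofReal (exp (t * θ)) * ∫⁻ ω, ENNReal.ofReal (exp (-(t * X ω))) ∂μ := by
  set ε := ENNReal.ofReal (exp (-(t * θ)))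
  have hsub : {ω | X ω ≤ θ} ⊆ {ω | ε ≤ ENNReal.ofReal (exp (-(t * X ω)))} := fun ω hω ↦ by
    have : t * X ω ≤ t * θ := mul_le_mul_of_nonneg_left hω ht
    exact ENNReal.ofReal_le_ofReal (exp_le_exp.2 (by linarith))
  calc μ {ω | X ω ≤ θ} ≤ (∫⁻ ω, ENNReal.ofReal (exp (-(t * X ω))) ∂μ) / ε :=
        (measure_mono hsub).trans <| meas_ge_le_lintegral_div (by fun_prop)
          (ENNReal.ofReal_pos.2 (exp_pos _)).ne' ENNReal.ofReal_ne_top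
    _ = _ := by
        rw [div_eq_mul_inv, mul_comm, ← ENNReal.ofReal_inv_of_pos (exp_pos _), ← exp_neg, neg_neg]

lemma lintegral_exp_neg_mul_add_sub_of_hasBinomialLaw {B₁ B₂ B₃ : Ω → ℕ} {m₁ m₂ m₃ : ℕ}
    {p₁ p₂ p₃ : ℝ} (hlaw₁ : HasBinomialLaw μ B₁ m₁ p₁) (hlaw₂ : HasBinomialLaw μ B₂ m₂ p₂)
    (hlaw₃ : HasBinomialLaw μ B₃ m₃ p₃) (hp₁ : p₁ ∈ Set.Icc 0 1) (hp₂ : p₂ ∈ Set.Icc 0 1)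
    (hp₃ : p₃ ∈ Set.Icc 0 1) (hindep : iIndepFun ![B₁, B₂, B₃] μ) (hB₁ : Measurable B₁)
    (hB₂ : Measurable B₂) (hB₃ : Measurable B₃) (t : ℝ) :
    ∫⁻ ω, ENNReal.ofReal (exp (-(t * ((B₁ ω : ℝ) + B₂ ω - B₃ ω)))) ∂μ =
      ENNReal.ofReal ((1 - p₁ + p₁ * exp (-t)) ^ m₁ * (1 - p₂ + p₂ * exp (-t)) ^ m₂ *
        (1 - p₃ + p₃ / exp (-t)) ^ m₃) := by
  have hsplit : ∀ ω, ENNReal.ofReal (exp (-(t * ((B₁ ω : ℝ) + B₂ ω - B₃ ω)))) =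
      ENNReal.ofReal (exp (-t) ^ B₁ ω) * ENNReal.ofReal (exp (-t) ^ B₂ ω) *
        ENNReal.ofReal ((exp (-t))⁻¹ ^ B₃ ω) := fun ω ↦ by
    rw [← ENNReal.ofReal_mul (by positivity), ← ENNReal.ofReal_mul (by positivity), ← exp_neg,
      ← exp_nat_mul, ← exp_nat_mul, ← exp_nat_mul, ← exp_add, ← exp_add]
    ring_nf
  have h₁ : 0 ≤ 1 - p₁ + p₁ * exp (-t) := by nlinarith [hp₁.1, hp₁.2, exp_pos (-t)]
  have h₂ : 0 ≤ 1 - p₂ + p₂ * exp (-t) := by nlinarith [hp₂.1, hp₂.2, exp_pos (-t)]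
  simp_rw [hsplit]
  rw [lintegral_mul_mul_eq_of_iIndepFun hindep hB₁ hB₂ hB₃
    (g₁ := fun j ↦ ENNReal.ofReal (exp (-t) ^ j)) (g₂ := fun j ↦ ENNReal.ofReal (exp (-t) ^ j))
    (g₃ := fun j ↦ ENNReal.ofReal ((exp (-t))⁻¹ ^ j)) (measurable_of_countable _)
    (measurable_of_countable _) (measurable_of_countable _),
    hlaw₁.lintegral_ofReal_pow hB₁ hp₁.1 hp₁.2 (exp_pos _).le,
    hlaw₂.lintegral_ofReal_pow hB₂ hp₂.1 hp₂.2 (exp_pos _).le,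
    hlaw₃.lintegral_ofReal_pow hB₃ hp₃.1 hp₃.2 (inv_pos.2 (exp_pos _)).le,
    ← ENNReal.ofReal_mul (by positivity), ← ENNReal.ofReal_mul (by positivity), div_eq_mul_inv]

end

theorem stmt_1_general {Ω : Type*} [MeasurableSpace Ω] (μ : Measure Ω)
    (n : ℕ) (a b : ℝ) (hb0 : 0 < b) (hba : b < a) (han : a < n)
    (m₁ m₃ : ℕ) (hm₁₃ : m₁ ≤ m₃)
    (B₁ B₂ B₃ : Ω → ℕ)
    (hmeas₁ : Measurable B₁) (hmeas₂ : Measurable B₂) (hmeas₃ : Measurable B₃)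
    (hlaw₁ : ∀ j : ℕ, μ {ω | B₁ ω = j} =
      ENNReal.ofReal ((m₁.choose j : ℝ) * (a / n) ^ j * (1 - a / n) ^ (m₁ - j)))
    (hlaw₂ : ∀ j : ℕ, μ {ω | B₂ ω = j} =
      ENNReal.ofReal (((m₃ - m₁).choose j : ℝ) * (b / n) ^ j * (1 - b / n) ^ (m₃ - m₁ - j)))
    (hlaw₃ : ∀ j : ℕ, μ {ω | B₃ ω = j} =
      ENNReal.ofReal ((m₃.choose j : ℝ) * (b / n) ^ j * (1 - b / n) ^ (m₃ - j)))
    (hindep : iIndepFun ![B₁, B₂, B₃] μ)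
    (θ : ℝ) :
    μ {ω | (B₁ ω : ℝ) + (B₂ ω : ℝ) - (B₃ ω : ℝ) ≤ θ} ≤
      ENNReal.ofReal (Real.exp
        (-(((m₃ : ℝ) / n) *
            (Real.sqrt (a ^ ((m₁ : ℝ) / m₃) * b ^ (1 - (m₁ : ℝ) / m₃)) - Real.sqrt b) ^ 2)
          + θ / 2 * Real.log
            (((a ^ ((m₁ : ℝ) / m₃) * b ^ (1 - (m₁ : ℝ) / m₃)) / n * (1 - b / n)) /
              (b / n * (1 - (a ^ ((m₁ : ℝ) / m₃) * b ^ (1 - (m₁ : ℝ) / m₃)) / n))))) := by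
  have ha : 0 < a := hb0.trans hba
  have hn : (0 : ℝ) < n := ha.trans han
  set γ : ℝ := (m₁ : ℝ) / m₃
  set ã := a ^ γ * b ^ (1 - γ)
  set p := a / n
  set q := b / n
  have hp' : ã / n = p ^ γ * q ^ (1 - γ) := rpow_mul_rpow_one_sub_div ha.le hb0.le hn γ
  set p' := ã / n
  have hq0 : 0 < q := by positivity
  have hp1 : p < 1 := (div_lt_one hn).2 han
  obtain ⟨hqp', hp'p⟩ : p' ∈ Set.Icc q p := hp' ▸ rpow_mul_rpow_one_sub_mem_Icc hq0.le
    (div_le_div_of_nonneg_right hba.le hn.le) (by positivity)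
    (div_le_one_of_le₀ (by exact_mod_cast hm₁₃) (by positivity))
  set R := p' * (1 - q) / (q * (1 - p'))
  have hR : 1 ≤ R := (one_le_div (by nlinarith)).2 (by nlinarith)
  set t := log R / 2
  have hs : exp (-t) = √(q * (1 - p') / (p' * (1 - q))) := by
    rw [exp_neg_log_div_two (by positivity), inv_div]
  calc μ {ω | (B₁ ω : ℝ) + (B₂ ω : ℝ) - (B₃ ω : ℝ) ≤ θ}
      ≤ ENNReal.ofReal (exp (t * θ)) *
          ∫⁻ ω, ENNReal.ofReal (exp (-(t * ((B₁ ω : ℝ) + B₂ ω - B₃ ω)))) ∂μ :=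
        measure_le_le_exp_mul_lintegral (by fun_prop) (div_nonneg (log_nonneg hR) zero_le_two) θ
    _ ≤ ENNReal.ofReal (exp (t * θ) * exp (-(m₃ * (√p' - √q) ^ 2))) := by
        have hq1 : q < 1 := by linarith
        rw [lintegral_exp_neg_mul_add_sub_of_hasBinomialLaw hlaw₁ hlaw₂ hlaw₃
          ⟨by positivity, hp1.le⟩ ⟨hq0.le, hq1.le⟩ ⟨hq0.le, hq1.le⟩ hindep hmeas₁ hmeas₂ hmeas₃,
          hs, ← ENNReal.ofReal_mul (exp_pos _).le]
        gcongr
        exact binomial_pgf_product_le_exp hq0 (hqp'.trans hp'p) hp1 hm₁₃ hp' rfl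
    _ = _ := by
        rw [← exp_add, sqrt_div' _ hn.le, sqrt_div' _ hn.le, div_sub_div_same, div_pow,
          sq_sqrt hn.le]
        congr 2
        ring

/-- Let `B₁ ~ Binom(m₁, a/n)`, `B₂ ~ Binom(m₃ − m₁, b/n)`,
`B₃ ~ Binom(m₃, b/n)` be mutually independent, `X := B₁ + B₂ − B₃`,
`β := m₃/n`, `γ := m₁/m₃`, `ã := a^γ b^{1−γ}`, `C̃ := (√ã − √b)²`,
`R(p,q) := p(1−q)/(q(1−p))`. Then for every real `θ`,
`Pr[X ≤ θ] ≤ exp(−βC̃ + (θ/2)·log R(ã/n, b/n))`.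
The binomial laws are encoded by the pointwise probability mass function. -/
theorem stmt_1 {Ω : Type*} [MeasurableSpace Ω] (μ : Measure Ω) [IsProbabilityMeasure μ]
    (n : ℕ) (hn : 0 < n) (a b : ℝ) (hb0 : 0 < b) (hba : b < a) (han : a < n)
    (m₁ m₃ : ℕ) (hm₁ : 0 < m₁) (hm₁₃ : m₁ ≤ m₃) (hβ : (m₃ : ℝ) / n ≤ 1)
    (B₁ B₂ B₃ : Ω → ℕ)
    (hmeas₁ : Measurable B₁) (hmeas₂ : Measurable B₂) (hmeas₃ : Measurable B₃)
    (hlaw₁ : ∀ j : ℕ, μ {ω | B₁ ω = j} =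
      ENNReal.ofReal ((m₁.choose j : ℝ) * (a / n) ^ j * (1 - a / n) ^ (m₁ - j)))
    (hlaw₂ : ∀ j : ℕ, μ {ω | B₂ ω = j} =
      ENNReal.ofReal (((m₃ - m₁).choose j : ℝ) * (b / n) ^ j * (1 - b / n) ^ (m₃ - m₁ - j)))
    (hlaw₃ : ∀ j : ℕ, μ {ω | B₃ ω = j} =
      ENNReal.ofReal ((m₃.choose j : ℝ) * (b / n) ^ j * (1 - b / n) ^ (m₃ - j)))
    (hindep : iIndepFun ![B₁, B₂, B₃] μ)
    (θ : ℝ) :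
    μ {ω | (B₁ ω : ℝ) + (B₂ ω : ℝ) - (B₃ ω : ℝ) ≤ θ} ≤
      ENNReal.ofReal (Real.exp
        (-(((m₃ : ℝ) / n) *
            (Real.sqrt (a ^ ((m₁ : ℝ) / m₃) * b ^ (1 - (m₁ : ℝ) / m₃)) - Real.sqrt b) ^ 2)
          + θ / 2 * Real.log
            (((a ^ ((m₁ : ℝ) / m₃) * b ^ (1 - (m₁ : ℝ) / m₃)) / n * (1 - b / n)) /
              (b / n * (1 - (a ^ ((m₁ : ℝ) / m₃) * b ^ (1 - (m₁ : ℝ) / m₃)) / n))))) :=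
  stmt_1_general μ n a b hb0 hba han m₁ m₃ hm₁₃ B₁ B₂ B₃ hmeas₁ hmeas₂ hmeas₃ hlaw₁ hlaw₂ hlaw₃
    hindep θ
end

section
/- Let k ≥ 2 be an integer, 0 < ε < 1, d > 0, and define a := (1 + (1 − 1/k)ε)·d and b := (1 − ε/k)·d. Let n > a be a real number, let γ ∈ [0,1], and define ã := a^γ · b^{1−γ}, b̃ := b, and R̃ := (ã/n)·(1 − b̃/n) / ((b̃/n)·(1 − ã/n)). Then (γ·ε)/2 ≤ log R̃ ≤ γ·ε·log 3 + a/(n − a). -/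
/-!
Writing `t = ε / k ≤ ε / 2`, the odds ratio splits as
`log R̃ = γ log (a / b) + log ((n - b) / (n - ã))`, with
`a / b = 1 + ε / (1 - t) ∈ [1 + ε, (1 + ε/2) / (1 - ε/2)]`.
The lower bound comes from `log (1 + ε) ≥ ε / 2`. For the upper bound,
`x ↦ (log (1 + x) - log (1 - x)) / x` is increasing on `(0, 1)` (its power series has
nonnegative coefficients), so its value at `ε / 2` is at most its value `2 log 3` at `1 / 2`;
the second summand is at most `(ã - b) / (n - ã) ≤ a / (n - a)` by `log y ≤ y - 1`.
-/

set_option autoImplicit false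

open Real

theorem log_one_add_sub_log_one_sub_mul_le {x c : ℝ} (hx : 0 ≤ x) (hxc : x ≤ c) (hc : c < 1) :
    c * (log (1 + x) - log (1 - x)) ≤ x * (log (1 + c) - log (1 - c)) := by
  have hsx := (hasSum_log_sub_log_of_abs_lt_one
    (by rw [abs_of_nonneg hx]; linarith : |x| < 1)).mul_left c
  have hsc := (hasSum_log_sub_log_of_abs_lt_one
    (by rw [abs_of_nonneg (hx.trans hxc)]; exact hc)).mul_left x
  refine hasSum_le (fun k => ?_) hsx hsc
  have hpow : x ^ (2 * k) ≤ c ^ (2 * k) := pow_le_pow_left₀ hx hxc _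
  have hcoef : 0 ≤ 2 * (1 / (2 * k + 1 : ℝ)) * (x * c) :=
    mul_nonneg (by positivity) (mul_nonneg hx (hx.trans hxc))
  calc c * (2 * (1 / (2 * k + 1)) * x ^ (2 * k + 1))
      = 2 * (1 / (2 * k + 1)) * (x * c) * x ^ (2 * k) := by ring
    _ ≤ 2 * (1 / (2 * k + 1)) * (x * c) * c ^ (2 * k) :=
      mul_le_mul_of_nonneg_left hpow hcoef
    _ = x * (2 * (1 / (2 * k + 1)) * c ^ (2 * k + 1)) := by ring

theorem log_one_add_sub_log_one_sub_le {x : ℝ} (hx : 0 ≤ x) (hx2 : x ≤ 1 / 2) :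
    log (1 + x) - log (1 - x) ≤ 2 * x * log 3 := by
  have h := log_one_add_sub_log_one_sub_mul_le hx hx2 (by norm_num)
  have hlog3 : log (1 + 1 / 2) - log (1 - 1 / 2) = log 3 := by
    rw [← log_div (by norm_num) (by norm_num)]
    norm_num
  rw [hlog3] at h
  linarith

theorem half_le_log_one_add_sub_div_one_sub {ε t : ℝ} (hε : 0 ≤ ε) (hε2 : ε ≤ 2)
    (ht : 0 ≤ t) (ht1 : t < 1) : ε / 2 ≤ log ((1 + ε - t) / (1 - t)) := by
  have hratio : 1 + ε ≤ (1 + ε - t) / (1 - t) := by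
    rw [le_div_iff₀ (by linarith)]
    nlinarith
  calc ε / 2 ≤ 2 * ε / (ε + 2) := by
        rw [le_div_iff₀ (by linarith)]
        nlinarith
    _ ≤ log (1 + ε) := le_log_one_add_of_nonneg hε
    _ ≤ log ((1 + ε - t) / (1 - t)) := log_le_log (by linarith) hratio

theorem log_one_add_sub_div_one_sub_le {ε t : ℝ} (hε : 0 ≤ ε) (hε1 : ε ≤ 1)
    (ht : t ≤ ε / 2) :
    log ((1 + ε - t) / (1 - t)) ≤ ε * log 3 := by
  have hratio : (1 + ε - t) / (1 - t) ≤ (1 + ε / 2) / (1 - ε / 2) := by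
    rw [div_le_div_iff₀ (by linarith) (by linarith)]
    nlinarith
  have hpos : 0 < (1 + ε - t) / (1 - t) := div_pos (by linarith) (by linarith)
  calc log ((1 + ε - t) / (1 - t))
      ≤ log ((1 + ε / 2) / (1 - ε / 2)) := log_le_log hpos hratio
    _ = log (1 + ε / 2) - log (1 - ε / 2) := log_div (by linarith) (by linarith)
    _ ≤ 2 * (ε / 2) * log 3 := log_one_add_sub_log_one_sub_le (by linarith) (by linarith)
    _ = ε * log 3 := by ring

section WeightedGeometricMean

variable {a b γ : ℝ}

theorem le_rpow_mul_rpow (hb : 0 < b) (hba : b ≤ a) (hγ : 0 ≤ γ) :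
    b ≤ a ^ γ * b ^ (1 - γ) :=
  calc b = b ^ γ * b ^ (1 - γ) := by rw [← rpow_add hb]; simp
    _ ≤ a ^ γ * b ^ (1 - γ) := by gcongr

theorem rpow_mul_rpow_le (hb : 0 < b) (hba : b ≤ a) (hγ : γ ≤ 1) :
    a ^ γ * b ^ (1 - γ) ≤ a :=
  calc a ^ γ * b ^ (1 - γ) ≤ a ^ γ * a ^ (1 - γ) := by
        gcongr
        exact rpow_nonneg (by linarith) _
    _ = a := by rw [← rpow_add (hb.trans_le hba)]; simp

theorem log_rpow_mul_rpow_sub_log (ha : 0 < a) (hb : 0 < b) :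
    log (a ^ γ * b ^ (1 - γ)) - log b = γ * (log a - log b) := by
  rw [log_mul (by positivity) (by positivity), log_rpow ha, log_rpow hb]
  ring

end WeightedGeometricMean

theorem log_odds_ratio {p q n : ℝ} (hp : 0 < p) (hq : 0 < q) (hpn : p < n) (hqn : q < n) :
    log (p / n * (1 - q / n) / (q / n * (1 - p / n)))
      = (log p - log q) + (log (n - q) - log (n - p)) := by
  have hn : n ≠ 0 := by linarith
  have hodds : p / n * (1 - q / n) / (q / n * (1 - p / n)) = p * (n - q) / (q * (n - p)) := by
    field_simp
  rw [hodds, log_div (by nlinarith) (by nlinarith), log_mul (by linarith) (by linarith),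
    log_mul (by linarith) (by linarith)]
  ring

theorem log_sub_sub_log_sub_le {p q a n : ℝ} (hq : 0 ≤ q) (hqp : q ≤ p) (hpa : p ≤ a)
    (han : a < n) : log (n - q) - log (n - p) ≤ a / (n - a) := by
  have hnp : 0 < n - p := by linarith
  calc log (n - q) - log (n - p) = log ((n - q) / (n - p)) :=
        (log_div (by linarith) hnp.ne').symm
    _ ≤ (n - q) / (n - p) - 1 := log_le_sub_one_of_pos (div_pos (by linarith) hnp)
    _ = (p - q) / (n - p) := by field_simp; ring
    _ ≤ a / (n - a) := div_le_div₀ (by linarith) (by linarith) (by linarith) (by linarith)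

/-- With `a := (1 + (1 − 1/k)ε)d`, `b := (1 − ε/k)d`, `n > a`,
`γ ∈ [0,1]`, `atil := a^γ b^{1−γ}`, `btil := b`, and
`Rtil := (ã/n)(1 − b̃/n) / ((b̃/n)(1 − ã/n))`, we have
`γε/2 ≤ log Rtil ≤ γ ε log 3 + a/(n − a)`. -/
theorem stmt_4 (k : ℕ) (hk : 2 ≤ k) (ε d : ℝ) (hε0 : 0 < ε) (hε1 : ε < 1) (hd : 0 < d)
    (γ : ℝ) (hγ0 : 0 ≤ γ) (hγ1 : γ ≤ 1)
    (a b atil btil Rtil n : ℝ)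
    (hn : a < n)
    (ha : a = (1 + (1 - 1 / (k : ℝ)) * ε) * d)
    (hb : b = (1 - ε / (k : ℝ)) * d)
    (hatil : atil = a ^ γ * b ^ (1 - γ))
    (hbtil : btil = b)
    (hRtil : Rtil = (atil / n) * (1 - btil / n) / ((btil / n) * (1 - atil / n))) :
    γ * ε / 2 ≤ Real.log Rtil ∧ Real.log Rtil ≤ γ * ε * Real.log 3 + a / (n - a) := by
  have hk2 : (2 : ℝ) ≤ k := by exact_mod_cast hk
  have ht0 : 0 ≤ ε / k := by positivity
  have htε : ε / k ≤ ε / 2 := div_le_div_of_nonneg_left hε0.le two_pos hk2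
  have hb0 : 0 < b := by rw [hb]; nlinarith
  have hab : a = b + ε * d := by rw [ha, hb]; ring
  have hba : b ≤ a := by nlinarith [mul_pos hε0 hd]
  have hlogab : log a - log b = log ((1 + ε - ε / k) / (1 - ε / k)) := by
    rw [← log_div (by linarith) hb0.ne', ha, hb, mul_div_mul_right _ _ hd.ne']
    ring_nf
  have hatil_ge := le_rpow_mul_rpow hb0 hba hγ0
  have hatil_le := rpow_mul_rpow_le hb0 hba hγ1
  rw [← hatil] at hatil_ge hatil_le
  rw [hRtil, hbtil, log_odds_ratio (by linarith) hb0 (by linarith) (by linarith), hatil,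
    log_rpow_mul_rpow_sub_log (hb0.trans_le hba) hb0, ← hatil, hlogab]
  have hlower := half_le_log_one_add_sub_div_one_sub hε0.le (by linarith) ht0 (by linarith)
  have hupper := log_one_add_sub_div_one_sub_le hε0.le hε1.le htε
  have hsub_nonneg : 0 ≤ log (n - b) - log (n - atil) := by
    linarith [log_le_log (by linarith : 0 < n - atil) (by linarith : n - atil ≤ n - b)]
  have hsub_le := log_sub_sub_log_sub_le hb0.le hatil_ge hatil_le hn
  constructor
  · linarith [mul_le_mul_of_nonneg_left hlower hγ0]
  · linarith [mul_le_mul_of_nonneg_left hupper hγ0]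
end

section
/- For every real ε ∈ (0,1] and every integer k ≥ 2, the quantity H(ε,k) := ((1 − ε/k)/ε²) · (log((1 + (1 − 1/k)·ε)/(1 − ε/k)))² satisfies H(ε,k) ≥ (log 2)². -/
/-!
With `y = ε / (1 - ε/k) ∈ [ε, 2]` one has `H(ε,k) = (log (1 + y) ^ 2 / y) / ε`. The function
`y ↦ log (1 + y) ^ 2 / y` is increasing on `(0, 2]`, because there `log (1 + y) ≤ 2y / (1 + y)`
(a consequence of `t ≤ sinh t` at `t = log (1 + y)`). Hence `H(ε,k) ≥ (log (1 + ε) / ε) ^ 2`, and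
Bernoulli's inequality `2 ^ ε ≤ 1 + ε` gives `log (1 + ε) ≥ ε log 2`.
-/

open Real Set

lemma Real.log_le_sub_inv_div_two {x : ℝ} (hx : 1 ≤ x) : log x ≤ (x - x⁻¹) / 2 := by
  rw [← sinh_log (by linarith)]
  exact self_le_sinh_iff.2 (log_nonneg hx)

lemma Real.log_one_add_le_two_mul_div {y : ℝ} (hy0 : 0 ≤ y) (hy2 : y ≤ 2) :
    log (1 + y) ≤ 2 * y / (1 + y) := by
  have hy : 0 < 1 + y := by linarith
  calc log (1 + y) ≤ ((1 + y) - (1 + y)⁻¹) / 2 := log_le_sub_inv_div_two (by linarith)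
    _ = y * (2 + y) / (2 * (1 + y)) := by field_simp; ring
    _ ≤ 2 * y / (1 + y) := by
      rw [div_le_div_iff₀ (by positivity) hy]
      nlinarith [mul_nonneg (mul_nonneg hy0 hy.le) (sub_nonneg.2 hy2)]

lemma Real.mul_log_two_le_log_one_add {ε : ℝ} (h0 : 0 ≤ ε) (h1 : ε ≤ 1) :
    ε * log 2 ≤ log (1 + ε) := by
  have h := rpow_one_add_le_one_add_mul_self (s := 1) (by norm_num) h0 h1
  rw [mul_one, one_add_one_eq_two] at h
  calc ε * log 2 = log ((2 : ℝ) ^ ε) := (log_rpow two_pos ε).symm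
    _ ≤ log (1 + ε) := log_le_log (by positivity) h

lemma Real.monotoneOn_log_one_add_sq_div :
    MonotoneOn (fun y => log (1 + y) ^ 2 / y) (Ioc 0 2) := by
  have hderiv : ∀ y ∈ Ioc (0 : ℝ) 2, HasDerivAt (fun y => log (1 + y) ^ 2 / y)
      (log (1 + y) * (2 * y / (1 + y) - log (1 + y)) / y ^ 2) y := by
    intro y ⟨hy0, _⟩
    have h1y : 1 + y ≠ 0 := by linarith
    have hlog : HasDerivAt (fun y => log (1 + y)) (1 / (1 + y)) y := by
      simpa using ((hasDerivAt_id y).const_add 1).log h1y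
    refine ((hlog.fun_pow 2).fun_div (hasDerivAt_id' y) hy0.ne').congr_deriv ?_
    field_simp
    ring
  apply monotoneOn_of_deriv_nonneg (convex_Ioc 0 2)
  · exact fun y hy => (hderiv y hy).continuousAt.continuousWithinAt
  · rw [interior_Ioc]
    exact fun y hy => (hderiv y (Ioo_subset_Ioc_self hy)).differentiableAt.differentiableWithinAt
  · rw [interior_Ioc]
    intro y hy
    rw [(hderiv y (Ioo_subset_Ioc_self hy)).deriv]
    have hL := log_nonneg (by linarith [hy.1] : (1 : ℝ) ≤ 1 + y)
    have := log_one_add_le_two_mul_div hy.1.le hy.2.le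
    exact div_nonneg (mul_nonneg hL (by linarith)) (sq_nonneg y)

/-- For `ε ∈ (0,1]` and integer `k ≥ 2`,
`H(ε,k) := ((1 − ε/k)/ε²) (log((1 + (1 − 1/k)ε)/(1 − ε/k)))² ≥ (log 2)²`. -/
theorem stmt_5 (ε : ℝ) (hε0 : 0 < ε) (hε1 : ε ≤ 1) (k : ℕ) (hk : 2 ≤ k) :
    (Real.log 2) ^ 2 ≤
      ((1 - ε / (k : ℝ)) / ε ^ 2) *
        (Real.log ((1 + (1 - 1 / (k : ℝ)) * ε) / (1 - ε / (k : ℝ)))) ^ 2 := by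
  have hk2 : (2 : ℝ) ≤ k := by exact_mod_cast hk
  have hεk : ε / k ≤ ε / 2 := div_le_div_of_nonneg_left hε0.le two_pos hk2
  set s := 1 - ε / (k : ℝ) with hs_def
  have hs : 1 / 2 ≤ s := by linarith
  have hs1 : s ≤ 1 := by linarith [div_nonneg hε0.le (by linarith : (0 : ℝ) ≤ k)]
  have hs0 : 0 < s := by linarith
  have hratio : (1 + (1 - 1 / (k : ℝ)) * ε) / s = 1 + ε / s := by
    rw [show 1 + (1 - 1 / (k : ℝ)) * ε = s + ε by rw [hs_def]; ring, add_div, div_self hs0.ne']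
  have hy : ε ≤ ε / s := le_div_self hε0.le hs0 hs1
  have hy2 : ε / s ≤ 2 := by
    rw [div_le_iff₀ hs0]; linarith
  have hmono := monotoneOn_log_one_add_sq_div ⟨hε0, by linarith⟩ ⟨hε0.trans_le hy, hy2⟩ hy
  have hlog2 := mul_log_two_le_log_one_add hε0.le hε1
  rw [hratio]
  calc log 2 ^ 2 = (ε * log 2) ^ 2 / ε / ε := by field_simp
    _ ≤ log (1 + ε) ^ 2 / ε / ε := by gcongr
    _ ≤ log (1 + ε / s) ^ 2 / (ε / s) / ε := div_le_div_of_nonneg_right hmono hε0.le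
    _ = s / ε ^ 2 * log (1 + ε / s) ^ 2 := by field_simp
end

section
/- Let a, b be reals with 0 < b ≤ a and let γ ∈ (0,1]. Then (√(a^γ · b^{1−γ}) − √b)² ≥ (b·γ²/4) · (log(a/b))². -/
set_option autoImplicit false

/-- For reals `0 < b ≤ a` and `γ ∈ (0,1]`,
`(√(a^γ b^{1−γ}) − √b)² ≥ (b γ²/4) (log(a/b))²`. -/
theorem stmt_6 (a b γ : ℝ) (hb : 0 < b) (hba : b ≤ a) (hγ0 : 0 < γ) (hγ1 : γ ≤ 1) :
    b * γ ^ 2 / 4 * (Real.log (a / b)) ^ 2 ≤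
      (Real.sqrt (a ^ γ * b ^ (1 - γ)) - Real.sqrt b) ^ 2 := by
  have ha : 0 < a := lt_of_lt_of_le hb hba
  set t := Real.log (a / b) with ht
  have ht0 : 0 ≤ t := Real.log_nonneg (by rw [le_div_iff₀ hb]; linarith)
  have hab : a ^ γ * b ^ (1 - γ) = b * Real.exp (γ * t) := by
    have h1 : a ^ γ = b ^ γ * Real.exp (γ * t) := by
      have : a = b * (a / b) := by field_simp
      rw [this, Real.mul_rpow hb.le (div_pos ha hb).le,
        Real.rpow_def_of_pos (div_pos ha hb), ← ht, mul_comm t γ]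
    rw [h1, mul_right_comm, ← Real.rpow_add hb]
    norm_num
  rw [hab, Real.sqrt_mul hb.le, ← Real.exp_half]
  have hsb : Real.sqrt b ^ 2 = b := Real.sq_sqrt hb.le
  have key : γ * t / 2 ≤ Real.exp (γ * t / 2) - 1 := by
    linarith [Real.add_one_le_exp (γ * t / 2)]
  have hx0 : 0 ≤ γ * t / 2 := by positivity
  have hsq : (γ * t / 2) ^ 2 ≤ (Real.exp (γ * t / 2) - 1) ^ 2 :=
    pow_le_pow_left₀ hx0 key 2
  calc b * γ ^ 2 / 4 * t ^ 2 = b * (γ * t / 2) ^ 2 := by ring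
    _ ≤ b * (Real.exp (γ * t / 2) - 1) ^ 2 := by
        exact mul_le_mul_of_nonneg_left hsq hb.le
    _ = (Real.sqrt b * Real.exp (γ * t / 2) - Real.sqrt b) ^ 2 := by
        rw [show Real.sqrt b * Real.exp (γ * t / 2) - Real.sqrt b
          = Real.sqrt b * (Real.exp (γ * t / 2) - 1) by ring, mul_pow, hsb]
end

section
/- Let v ∈ ℝⁿ and let γ, β be real numbers. Suppose that for every subset S ⊆ {1,…,n}, ∑_{i∈S} v_i ≥ γ·(|S| − β). Then for every vector z ∈ ℝⁿ with 0 ≤ z_i ≤ 1 for all i, we have ⟨z, v⟩ ≥ γ·(∑_{i=1}^n z_i − β). -/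
/-!
Put `T = {i | vᵢ < γ}`. For `0 ≤ zᵢ ≤ 1` each term `zᵢ (vᵢ − γ)` is at least `vᵢ − γ` when
`i ∈ T` and at least `0` otherwise, so
`⟨z, v⟩ − γ ∑ zᵢ = ∑ zᵢ (vᵢ − γ) ≥ ∑_{i∈T} (vᵢ − γ) = ∑_{i∈T} vᵢ − γ|T| ≥ −γβ`
by the hypothesis applied to `S = T`.
-/

open Finset

theorem sum_filter_neg_le_sum_mul {ι : Type*} (s : Finset ι) (w z : ι → ℝ)
    (hz : ∀ i ∈ s, 0 ≤ z i ∧ z i ≤ 1) :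
    ∑ i ∈ s with w i < 0, w i ≤ ∑ i ∈ s, z i * w i := by
  rw [sum_filter]
  refine sum_le_sum fun i hi => ?_
  obtain ⟨hz₀, hz₁⟩ := hz i hi
  split_ifs with hw
  · nlinarith
  · exact mul_nonneg hz₀ (not_lt.1 hw)

/-- If `∑_{i∈S} vᵢ ≥ γ(|S| − β)` for every subset `S ⊆ [n]`, then
for every `z` with `0 ≤ zᵢ ≤ 1`, `⟨z, v⟩ ≥ γ(∑ᵢ zᵢ − β)`. -/
theorem stmt_9 (n : ℕ) (v : Fin n → ℝ) (γ β : ℝ)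
    (hS : ∀ S : Finset (Fin n), γ * ((S.card : ℝ) - β) ≤ ∑ i ∈ S, v i)
    (z : Fin n → ℝ) (hz : ∀ i, 0 ≤ z i ∧ z i ≤ 1) :
    γ * ((∑ i, z i) - β) ≤ ∑ i, z i * v i := by
  set T := ({i | v i - γ < 0} : Finset (Fin n))
  have hT : -(γ * β) ≤ ∑ i ∈ T, (v i - γ) := by
    rw [sum_sub_distrib, sum_const, nsmul_eq_mul]
    linarith [hS T]
  have hz_sum : ∑ i ∈ T, (v i - γ) ≤ ∑ i, z i * (v i - γ) :=
    sum_filter_neg_le_sum_mul univ (fun i => v i - γ) z fun i _ => hz i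
  have hshift : ∑ i, z i * (v i - γ) = ∑ i, z i * v i - γ * ∑ i, z i := by
    rw [mul_sum, ← sum_sub_distrib]
    exact sum_congr rfl fun i _ => by ring
  linarith
end

section
/- Let w ∈ ℝⁿ and let K, L be integers with 1 ≤ L ≤ K ≤ n. Then for every subset T ⊆ {1,…,n} with |T| = K, |∑_{j∈T} w_j| ≤ (K/L) · max over subsets U ⊆ {1,…,n} with |U| = L of |∑_{j∈U} w_j|. -/
set_option autoImplicit false

/-!
Averaging over all `L`-subsets `U` of `T`: each element of `T` lies in exactly
`C(K-1, L-1)` of them, so `C(K-1, L-1) · ∑_T w = ∑_U ∑_{j ∈ U} w_j`, whose absolute value is at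
most `C(K, L) · max_U |∑_U w|`. The ratio `C(K, L) / C(K-1, L-1)` is `K / L`.
-/

open Finset

theorem Nat.mul_choose_eq_mul_choose_sub_one {n k : ℕ} (hk : 1 ≤ k) :
    k * n.choose k = n * (n - 1).choose (k - 1) := by
  obtain ⟨k, rfl⟩ := Nat.exists_eq_add_of_le' hk
  rcases n with _ | n
  · simp
  · simpa [Nat.mul_comm] using (Nat.add_one_mul_choose_eq n k).symm

variable {α : Type*} [DecidableEq α]

theorem Finset.card_filter_mem_powersetCard {s : Finset α} {a : α} (ha : a ∈ s) {k : ℕ}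
    (hk : 1 ≤ k) : #((s.powersetCard k).filter (a ∈ ·)) = (#s - 1).choose (k - 1) := by
  simpa using card_filter_powersetCard_subset {a} s k (singleton_subset_iff.2 ha) (by simpa)

theorem Finset.sum_powersetCard_sum {M : Type*} [AddCommMonoid M] (f : α → M) (s : Finset α)
    {k : ℕ} (hk : 1 ≤ k) :
    ∑ U ∈ s.powersetCard k, ∑ j ∈ U, f j = (#s - 1).choose (k - 1) • ∑ j ∈ s, f j := by
  rw [sum_comm' (t' := s) (s' := fun j => (s.powersetCard k).filter (j ∈ ·)), smul_sum]
  · exact sum_congr rfl fun j hj => by rw [sum_const, card_filter_mem_powersetCard hj hk]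
  · intro U j
    simp only [mem_powersetCard, mem_filter]
    exact ⟨fun ⟨⟨hUs, _⟩, hj⟩ => ⟨⟨⟨hUs, ‹_›⟩, hj⟩, hUs hj⟩, fun ⟨⟨hU, hj⟩, _⟩ => ⟨hU, hj⟩⟩

theorem Finset.mul_abs_sum_le_of_forall_powersetCard {f : α → ℝ} {s : Finset α} {k : ℕ}
    {M : ℝ} (hk : 1 ≤ k) (hks : k ≤ #s)
    (hM : ∀ U ∈ s.powersetCard k, |∑ j ∈ U, f j| ≤ M) :
    k * |∑ j ∈ s, f j| ≤ #s * M := by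
  set c := (#s - 1).choose (k - 1)
  have hc : (0 : ℝ) < c := by exact_mod_cast Nat.choose_pos (by omega)
  have hcount : (c : ℝ) * |∑ j ∈ s, f j| ≤ (#s).choose k * M :=
    calc (c : ℝ) * |∑ j ∈ s, f j|
        = |∑ U ∈ s.powersetCard k, ∑ j ∈ U, f j| := by
          rw [sum_powersetCard_sum f s hk, nsmul_eq_mul, abs_mul, Nat.abs_cast]
      _ ≤ ∑ U ∈ s.powersetCard k, |∑ j ∈ U, f j| := abs_sum_le_sum_abs _ _
      _ ≤ ∑ _U ∈ s.powersetCard k, M := sum_le_sum hM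
      _ = (#s).choose k * M := by rw [sum_const, card_powersetCard, nsmul_eq_mul]
  have hid : (k : ℝ) * (#s).choose k = #s * c := by
    exact_mod_cast Nat.mul_choose_eq_mul_choose_sub_one hk
  refine le_of_mul_le_mul_left ?_ hc
  calc (c : ℝ) * (k * |∑ j ∈ s, f j|) = k * (c * |∑ j ∈ s, f j|) := by ring
    _ ≤ k * ((#s).choose k * M) := by gcongr
    _ = c * (#s * M) := by rw [← mul_assoc, hid]; ring

/-- For `w ∈ ℝⁿ`, integers `1 ≤ L ≤ K ≤ n`, and every `T ⊆ [n]` with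
`|T| = K`, `|∑_{j∈T} w_j| ≤ (K/L) · max_{|U| = L} |∑_{j∈U} w_j|`. -/
theorem stmt_10 (n : ℕ) (w : Fin n → ℝ) (K L : ℕ)
    (hL : 1 ≤ L) (hLK : L ≤ K) (hKn : K ≤ n)
    (T : Finset (Fin n)) (hT : T.card = K) :
    |∑ j ∈ T, w j| ≤
      ((K : ℝ) / L) *
        (Finset.powersetCard L (Finset.univ : Finset (Fin n))).sup'
          (Finset.powersetCard_nonempty.2 (by simpa using hLK.trans hKn))
          (fun U => |∑ j ∈ U, w j|) := by
  subst hT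
  rw [div_mul_eq_mul_div, le_div_iff₀ (by exact_mod_cast hL), mul_comm]
  exact mul_abs_sum_le_of_forall_powersetCard hL hLK fun U hU =>
    le_sup' (fun U => |∑ j ∈ U, w j|) (powersetCard_mono (subset_univ T) hU)
end

section
/- Let n, n₁, n₂ be positive integers with n₁ ≤ 10⁻⁶·n and 10⁻⁶·n ≤ n₂ ≤ n. Let M be a random n×n real matrix whose n² entries are mutually independent, each with mean 0, variance at most σ² for some real σ ≥ 20/√n, and almost surely bounded in [−1,1]. Then with probability at least 1 − exp(−8·(n₁ + 10⁻⁶·n)·log(n/n₁ + 10⁶)), simultaneously for all subsets S, T ⊆ {1,…,n} with |S| = n₁ and |T| = n₂, the magnitude of the sum of the entries of M over S × T satisfies |∑_{i∈S} ∑_{j∈T} M_{ij}| ≤ 2·(n₁ + n₂)·σ·√n. -/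
set_option autoImplicit false

open MeasureTheory ProbabilityTheory

/-!
Bennett's bound `E e^{cX} ≤ exp (v (e^c - 1 - c))` for a centred variable with `|X| ≤ 1` and
variance at most `v` makes the sum over a fixed block `S × T` exceed `t` in absolute value with
probability at most `2 exp (n₁ n₂ σ² (e^c - 1 - c) - c t)`. A union bound over the
`C(n, n₁) C(n, n₂) ≤ exp (n₁ (1 + log (n / n₁)) + n₂ (1 + log (n / n₂)))` blocks reduces the
theorem to an inequality between numbers. With `L = log (n / n₁)`, the choice
`c = L - 4` settles it when `σ √n ≤ 24 L`, where the variance is so small that only the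
Poisson-type behaviour of Bennett's bound is strong enough; otherwise some `c ≤ 1` does, as in
Bernstein's inequality.
-/

open Real Finset
open scoped Nat

lemma exp_eq_one_add_add_tsum (y : ℝ) : exp y = 1 + y + ∑' n : ℕ, y ^ (n + 2) / (n + 2)! := by
  rw [exp_eq_exp_ℝ, NormedSpace.exp_eq_tsum_div]
  dsimp only
  rw [← (summable_pow_div_factorial y).sum_add_tsum_nat_add 2]
  simp [sum_range_succ]

lemma exp_mul_le_one_add_add_mul_sq {c x : ℝ} (hc : 0 ≤ c) (hx : |x| ≤ 1) :
    exp (c * x) ≤ 1 + c * x + (exp c - 1 - c) * x ^ 2 := by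
  have hterm (n : ℕ) : (c * x) ^ (n + 2) / (n + 2)! ≤ c ^ (n + 2) / (n + 2)! * x ^ 2 := by
    rw [div_mul_eq_mul_div]
    gcongr
    calc (c * x) ^ (n + 2) ≤ |c * x| ^ (n + 2) := (le_abs_self _).trans_eq (abs_pow _ _)
      _ = c ^ (n + 2) * |x| ^ (n + 2) := by rw [abs_mul, abs_of_nonneg hc, mul_pow]
      _ ≤ c ^ (n + 2) * |x| ^ 2 := by
        gcongr c ^ (n + 2) * ?_
        exact pow_le_pow_of_le_one (abs_nonneg x) hx (by omega)
      _ = c ^ (n + 2) * x ^ 2 := by rw [sq_abs]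
  have hsummable (y : ℝ) : Summable fun n : ℕ => y ^ (n + 2) / (n + 2)! :=
    (summable_nat_add_iff 2).mpr (summable_pow_div_factorial y)
  have htail : ∑' n : ℕ, (c * x) ^ (n + 2) / (n + 2)! ≤ (exp c - 1 - c) * x ^ 2 := by
    rw [show exp c - 1 - c = ∑' n : ℕ, c ^ (n + 2) / (n + 2)! by
      rw [exp_eq_one_add_add_tsum c]; ring, ← tsum_mul_right]
    exact (hsummable _).tsum_le_tsum hterm ((hsummable c).mul_right _)
  rw [exp_eq_one_add_add_tsum (c * x)]
  linarith

lemma exp_sub_one_sub_le_of_abs_le_one {c : ℝ} (hc : |c| ≤ 1) :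
    exp c - 1 - c ≤ 3 / 4 * c ^ 2 := by
  have h := (abs_le.mp (Real.exp_bound hc two_pos)).2
  have h2 : ∑ m ∈ range 2, c ^ m / m ! = 1 + c := by simp [sum_range_succ]
  rw [h2, sq_abs] at h
  norm_num at h
  linarith

section Bennett

variable {Ω : Type*} [MeasurableSpace Ω] {μ : Measure Ω}

lemma integrable_exp_mul_of_abs_le_one [IsFiniteMeasure μ] {X : Ω → ℝ} (hX : AEMeasurable X μ)
    (hbdd : ∀ᵐ ω ∂μ, |X ω| ≤ 1) (c : ℝ) : Integrable (fun ω => exp (c * X ω)) μ := by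
  refine .of_bound (hX.const_mul c).exp.aestronglyMeasurable (exp |c|) ?_
  filter_upwards [hbdd] with ω h
  rw [norm_of_nonneg (exp_pos _).le, exp_le_exp]
  calc c * X ω ≤ |c * X ω| := le_abs_self _
    _ = |c| * |X ω| := abs_mul _ _
    _ ≤ |c| := mul_le_of_le_one_right (abs_nonneg c) h

lemma mgf_le_exp_mul_exp_sub_one_sub [IsProbabilityMeasure μ] {X : Ω → ℝ}
    (hX : AEMeasurable X μ) (hmean : ∫ ω, X ω ∂μ = 0) {v : ℝ} (hvar : ∫ ω, X ω ^ 2 ∂μ ≤ v)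
    (hbdd : ∀ᵐ ω ∂μ, |X ω| ≤ 1) {c : ℝ} (hc : 0 ≤ c) :
    mgf X μ c ≤ exp (v * (exp c - 1 - c)) := by
  have hk : 0 ≤ exp c - 1 - c := by linarith [add_one_le_exp c]
  have hint : Integrable X μ := .of_bound hX.aestronglyMeasurable 1 hbdd
  have hint2 : Integrable (fun ω => X ω ^ 2) μ := by
    refine .of_bound (hX.pow_const 2).aestronglyMeasurable 1 ?_
    filter_upwards [hbdd] with ω h
    rw [norm_pow, norm_eq_abs]
    exact pow_le_one₀ (abs_nonneg _) h
  have hint1 : Integrable (fun ω => 1 + c * X ω) μ := (integrable_const 1).add (hint.const_mul c)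
  calc mgf X μ c ≤ ∫ ω, (1 + c * X ω + (exp c - 1 - c) * X ω ^ 2) ∂μ := by
        refine integral_mono_ae (integrable_exp_mul_of_abs_le_one hX hbdd c)
          (hint1.add (hint2.const_mul _)) ?_
        filter_upwards [hbdd] with ω h using exp_mul_le_one_add_add_mul_sq hc h
    _ = 1 + (exp c - 1 - c) * ∫ ω, X ω ^ 2 ∂μ := by
        rw [integral_add hint1 (hint2.const_mul _), integral_add (integrable_const 1)
          (hint.const_mul c), integral_const_mul, integral_const_mul, hmean]
        simp
    _ ≤ 1 + v * (exp c - 1 - c) := by nlinarith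
    _ ≤ exp (v * (exp c - 1 - c)) := by linarith [add_one_le_exp (v * (exp c - 1 - c))]

variable [IsProbabilityMeasure μ] {ι : Type*} {X : ι → Ω → ℝ} {v : ℝ}

lemma measureReal_sum_ge_le (hindep : iIndepFun X μ) (hmeas : ∀ i, Measurable (X i))
    (hmean : ∀ i, ∫ ω, X i ω ∂μ = 0) (hvar : ∀ i, ∫ ω, X i ω ^ 2 ∂μ ≤ v)
    (hbdd : ∀ i, ∀ᵐ ω ∂μ, |X i ω| ≤ 1) (s : Finset ι) {c : ℝ} (hc : 0 ≤ c) (r : ℝ) :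
    μ.real {ω | r ≤ ∑ i ∈ s, X i ω} ≤ exp (#s * v * (exp c - 1 - c) - c * r) := by
  have hchernoff := measure_ge_le_exp_mul_mgf (X := ∑ i ∈ s, X i) r hc
    (hindep.integrable_exp_mul_sum hmeas fun i _ =>
      integrable_exp_mul_of_abs_le_one (hmeas i).aemeasurable (hbdd i) c)
  simp only [Finset.sum_apply] at hchernoff
  have hmgf : mgf (∑ i ∈ s, X i) μ c ≤ exp (#s * v * (exp c - 1 - c)) := by
    rw [hindep.mgf_sum hmeas, mul_assoc, exp_nat_mul, ← prod_const]
    exact prod_le_prod (fun i _ => mgf_nonneg) fun i _ =>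
      mgf_le_exp_mul_exp_sub_one_sub (hmeas i).aemeasurable (hmean i) (hvar i) (hbdd i) hc
  calc _ ≤ exp (-c * r) * mgf (∑ i ∈ s, X i) μ c := hchernoff
    _ ≤ exp (-c * r) * exp (#s * v * (exp c - 1 - c)) := by gcongr
    _ = _ := by rw [← exp_add]; ring_nf

lemma measureReal_abs_sum_gt_le (hindep : iIndepFun X μ) (hmeas : ∀ i, Measurable (X i))
    (hmean : ∀ i, ∫ ω, X i ω ∂μ = 0) (hvar : ∀ i, ∫ ω, X i ω ^ 2 ∂μ ≤ v)
    (hbdd : ∀ i, ∀ᵐ ω ∂μ, |X i ω| ≤ 1) (s : Finset ι) {c : ℝ} (hc : 0 ≤ c) (r : ℝ) :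
    μ.real {ω | r < |∑ i ∈ s, X i ω|} ≤ 2 * exp (#s * v * (exp c - 1 - c) - c * r) := by
  have hupper := measureReal_sum_ge_le hindep hmeas hmean hvar hbdd s hc r
  have hlower := measureReal_sum_ge_le (X := fun i ω => -X i ω)
    (hindep.comp (fun _ x => -x) fun _ => measurable_neg) (fun i => (hmeas i).neg)
    (fun i => by rw [integral_neg, hmean i, neg_zero]) (fun i => by simpa using hvar i)
    (fun i => by simpa using hbdd i) s hc r
  calc μ.real {ω | r < |∑ i ∈ s, X i ω|}
      ≤ μ.real ({ω | r ≤ ∑ i ∈ s, X i ω} ∪ {ω | r ≤ ∑ i ∈ s, -X i ω}) := by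
        refine measureReal_mono fun ω hω => ?_
        rw [Set.mem_ofPred_eq, lt_abs, ← sum_neg_distrib] at hω
        exact hω.imp le_of_lt le_of_lt
    _ ≤ _ := (measureReal_union_le _ _).trans (add_le_add hupper hlower)
    _ = _ := by ring

lemma measureReal_exists_abs_blockSum_gt_le {κ : Type*} [Fintype ι] [Fintype κ]
    {M : ι × κ → Ω → ℝ} (hindep : iIndepFun M μ) (hmeas : ∀ p, Measurable (M p))
    (hmean : ∀ p, ∫ ω, M p ω ∂μ = 0) (hvar : ∀ p, ∫ ω, M p ω ^ 2 ∂μ ≤ v)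
    (hbdd : ∀ p, ∀ᵐ ω ∂μ, |M p ω| ≤ 1) (k l : ℕ) {c : ℝ} (hc : 0 ≤ c) (t : ℝ) :
    μ.real {ω | ∃ S : Finset ι, ∃ T : Finset κ, #S = k ∧ #T = l ∧
        t < |∑ i ∈ S, ∑ j ∈ T, M (i, j) ω|} ≤
      (Fintype.card ι).choose k * (Fintype.card κ).choose l *
        (2 * exp (k * l * v * (exp c - 1 - c) - c * t)) := by
  classical
  set P := (univ : Finset ι).powersetCard k ×ˢ (univ : Finset κ).powersetCard l
  have hcover : {ω | ∃ S : Finset ι, ∃ T : Finset κ, #S = k ∧ #T = l ∧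
      t < |∑ i ∈ S, ∑ j ∈ T, M (i, j) ω|} ⊆
      ⋃ q ∈ P, {ω | t < |∑ p ∈ q.1 ×ˢ q.2, M p ω|} := by
    rintro ω ⟨S, T, hS, hT, hω⟩
    refine Set.mem_biUnion (x := (S, T)) (by simp [P, hS, hT]) ?_
    rwa [Set.mem_ofPred_eq, sum_product]
  calc _ ≤ ∑ q ∈ P, μ.real {ω | t < |∑ p ∈ q.1 ×ˢ q.2, M p ω|} :=
        (measureReal_mono hcover (measure_ne_top _ _)).trans (measureReal_biUnion_finset_le P _)
    _ ≤ ∑ q ∈ P, 2 * exp (k * l * v * (exp c - 1 - c) - c * t) := by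
        refine sum_le_sum fun q hq => ?_
        simp only [P, mem_product, mem_powersetCard_univ] at hq
        have h := measureReal_abs_sum_gt_le hindep hmeas hmean hvar hbdd (q.1 ×ˢ q.2) hc t
        rwa [card_product, hq.1, hq.2, Nat.cast_mul] at h
    _ = _ := by simp [P, card_product, card_powersetCard]

end Bennett

lemma ofReal_one_sub_le_of_measureReal_compl_le {Ω : Type*} [MeasurableSpace Ω] {μ : Measure Ω}
    [IsProbabilityMeasure μ] {s : Set Ω} {ε : ℝ} (h : μ.real sᶜ ≤ ε) :
    ENNReal.ofReal (1 - ε) ≤ μ s := by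
  refine ENNReal.ofReal_le_of_le_toReal ?_
  have hunion := measureReal_union_le (μ := μ) s sᶜ
  rw [Set.union_compl_self, probReal_univ] at hunion
  rw [← measureReal_def]
  linarith

lemma cast_choose_le_exp (n k : ℕ) : (n.choose k : ℝ) ≤ exp (k * (1 + log (n / k))) := by
  rcases k.eq_zero_or_pos with rfl | hk
  · simp
  rcases lt_or_ge n k with hnk | hkn
  · rw [Nat.choose_eq_zero_of_lt hnk, Nat.cast_zero]
    positivity
  have hk' : (0 : ℝ) < k := by exact_mod_cast hk
  have hn : (0 : ℝ) < n := by exact_mod_cast hk.trans_le hkn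
  calc (n.choose k : ℝ) ≤ n ^ k / k ! := Nat.choose_le_pow_div k n
    _ = (n / k) ^ k * (k ^ k / k !) := by rw [div_pow]; field_simp
    _ ≤ (n / k) ^ k * exp k := by gcongr; exact pow_div_factorial_le_exp _ hk'.le k
    _ = exp (k * (1 + log (n / k))) := by
        rw [mul_add, mul_one, exp_add, ← log_pow, exp_log (by positivity), mul_comm]

lemma ten_le_log_of_le {x : ℝ} (hx : 1000000 ≤ x) : 10 ≤ log x := by
  rw [le_log_iff_exp_le (by linarith)]
  calc exp 10 = exp 1 ^ 10 := by rw [← exp_nat_mul]; norm_num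
    _ ≤ 3 ^ 10 := by gcongr; exact exp_one_lt_three.le
    _ ≤ x := by linarith

lemma union_bound_exponent_le {a b m : ℝ} (ha : 1 ≤ a) (ham : a ≤ m / 1000000)
    (hbm : m / 1000000 ≤ b) :
    log 2 + a * (1 + log (m / a)) + b * (1 + log (m / b)) +
        8 * (a + m / 1000000) * log (m / a + 1000000) ≤ 12 * (a + b) * log (m / a) := by
  have hx : 1000000 ≤ m / a := by rw [le_div_iff₀ (by linarith)]; linarith
  have hL := ten_le_log_of_le hx
  have hb : 0 < b := by linarith
  have hlogb : log (m / b) ≤ log (m / a) :=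
    log_le_log (div_pos (by linarith) hb) (((div_le_iff₀ hb).mpr (by linarith)).trans hx)
  have hlogA : log (m / a + 1000000) ≤ 1 + log (m / a) := by
    calc log (m / a + 1000000) ≤ log (2 * (m / a)) := log_le_log (by linarith) (by linarith)
      _ = log 2 + log (m / a) := log_mul two_ne_zero (by linarith)
      _ ≤ 1 + log (m / a) := by linarith [log_two_lt_d9]
  have hlogA0 : 0 ≤ log (m / a + 1000000) := log_nonneg (by linarith)
  nlinarith [mul_le_mul_of_nonneg_left hlogb hb.le, log_two_lt_d9,
    mul_le_mul (by linarith : a + m / 1000000 ≤ a + b) hlogA hlogA0 (by linarith)]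

lemma exists_bennett_exponent {s L v : ℝ} (hs : 20 ≤ s) (hL : 10 ≤ L) (hv : 0 ≤ v)
    (hvL : v * exp L ≤ s ^ 2) :
    ∃ c, 0 ≤ c ∧ v * (exp c - 1 - c) - 2 * c * s ≤ -(12 * L) := by
  have hmoderate (c : ℝ) (hc0 : 0 ≤ c) (hc1 : c ≤ 1) (hcv : c * v ≤ 2 * s) :
      v * (exp c - 1 - c) - 2 * c * s ≤ -(c * s / 2) := by
    have h := exp_sub_one_sub_le_of_abs_le_one (abs_le.mpr ⟨by linarith, hc1⟩)
    nlinarith [mul_le_mul_of_nonneg_left h hv, mul_le_mul_of_nonneg_left hcv hc0]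
  rcases le_or_gt s (24 * L) with hsL | hsL
  · refine ⟨L - 4, by linarith, ?_⟩
    have he4 : 53 ≤ exp 4 :=
      calc (53 : ℝ) ≤ 2.7 ^ 4 := by norm_num
        _ ≤ exp 1 ^ 4 := by gcongr; linarith [exp_one_gt_d9]
        _ = exp 4 := by rw [← exp_nat_mul]; norm_num
    have hbig : v * (exp (L - 4) - 1 - (L - 4)) ≤ s ^ 2 / 53 :=
      calc v * (exp (L - 4) - 1 - (L - 4)) ≤ v * exp L / exp 4 := by
            rw [mul_div_assoc, ← exp_sub]; gcongr; linarith
        _ ≤ s ^ 2 / 53 := by gcongr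
    nlinarith
  rcases le_or_gt v (2 * s) with hv2 | hv2
  · refine ⟨1, zero_le_one, ?_⟩
    linarith [hmoderate 1 zero_le_one le_rfl (by linarith)]
  · have hv0 : 0 < v := by linarith
    refine ⟨2 * s / v, by positivity, ?_⟩
    have h := hmoderate (2 * s / v) (by positivity) (by rw [div_le_one hv0]; linarith)
      (by rw [div_mul_cancel₀ _ hv0.ne'])
    have hexpL : 12 * L ≤ exp L := by
      have h3 := pow_div_factorial_le_exp L (by linarith) 3
      norm_num [Nat.factorial] at h3
      nlinarith [mul_le_mul_of_nonneg_left (show 72 ≤ L ^ 2 by nlinarith) (by linarith : 0 ≤ L)]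
    have hsv : exp L ≤ s ^ 2 / v := by rw [le_div_iff₀ hv0]; linarith
    calc _ ≤ -(2 * s / v * s / 2) := h
      _ = -(s ^ 2 / v) := by ring
      _ ≤ -(12 * L) := by linarith

lemma exists_tail_exponent_le {a b m σ : ℝ} (ha : 0 < a) (ham : a ≤ m / 1000000) (hb : 0 ≤ b)
    (hσ : 20 ≤ σ * √m) :
    ∃ c, 0 ≤ c ∧ a * b * σ ^ 2 * (exp c - 1 - c) - c * (2 * (a + b) * σ * √m) ≤
      -(12 * (a + b) * log (m / a)) := by
  have hx : 1000000 ≤ m / a := by rw [le_div_iff₀ ha]; linarith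
  have hm : 0 < m := by linarith
  have hab : 0 < a + b := by linarith
  have hv : a * b * σ ^ 2 / (a + b) * exp (log (m / a)) ≤ (σ * √m) ^ 2 := by
    rw [exp_log (by positivity), mul_pow, sq_sqrt hm.le]
    calc a * b * σ ^ 2 / (a + b) * (m / a) = b / (a + b) * (σ ^ 2 * m) := by
          field_simp
      _ ≤ 1 * (σ ^ 2 * m) := by gcongr; rw [div_le_one hab]; linarith
      _ = σ ^ 2 * m := one_mul _
  obtain ⟨c, hc, hexp⟩ := exists_bennett_exponent hσ (ten_le_log_of_le hx) (by positivity) hv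
  refine ⟨c, hc, ?_⟩
  calc a * b * σ ^ 2 * (exp c - 1 - c) - c * (2 * (a + b) * σ * √m)
      = (a + b) * (a * b * σ ^ 2 / (a + b) * (exp c - 1 - c) - 2 * c * (σ * √m)) := by
        field_simp
    _ ≤ (a + b) * -(12 * log (m / a)) := by gcongr
    _ = _ := by ring

theorem stmt_11_general {Ω : Type*} [MeasurableSpace Ω] (μ : Measure Ω) [IsProbabilityMeasure μ]
    (n n₁ n₂ : ℕ) (hn₁pos : 0 < n₁)
    (hn₁ : (n₁ : ℝ) ≤ (n : ℝ) / 1000000)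
    (hn₂lo : (n : ℝ) / 1000000 ≤ (n₂ : ℝ))
    (σ : ℝ) (hσ : 20 / Real.sqrt n ≤ σ)
    (M : Fin n × Fin n → Ω → ℝ)
    (hmeas : ∀ p, Measurable (M p))
    (hindep : iIndepFun (m := fun _ : Fin n × Fin n => (inferInstance : MeasurableSpace ℝ)) M μ)
    (hmean : ∀ p, ∫ ω, M p ω ∂μ = 0)
    (hvar : ∀ p, ∫ ω, (M p ω) ^ 2 ∂μ ≤ σ ^ 2)
    (hbdd : ∀ p, ∀ᵐ ω ∂μ, |M p ω| ≤ 1) :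
    ENNReal.ofReal
        (1 - Real.exp (-8 * ((n₁ : ℝ) + (n : ℝ) / 1000000) *
          Real.log ((n : ℝ) / n₁ + 1000000))) ≤
      μ {ω | ∀ S T : Finset (Fin n), S.card = n₁ → T.card = n₂ →
        |∑ i ∈ S, ∑ j ∈ T, M (i, j) ω| ≤ 2 * ((n₁ : ℝ) + n₂) * σ * Real.sqrt n} := by
  have hn₁one : (1 : ℝ) ≤ n₁ := by exact_mod_cast hn₁pos
  have hs : 20 ≤ σ * √n := by
    rwa [div_le_iff₀ (sqrt_pos.mpr (by linarith))] at hσ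
  obtain ⟨c, hc, hexponent⟩ :=
    exists_tail_exponent_le (b := n₂) (by linarith) hn₁ n₂.cast_nonneg hs
  have hbudget := union_bound_exponent_le hn₁one hn₁ hn₂lo
  refine ofReal_one_sub_le_of_measureReal_compl_le ?_
  rw [Set.compl_ofPred]
  push Not
  refine (measureReal_exists_abs_blockSum_gt_le hindep hmeas hmean hvar hbdd n₁ n₂ hc _).trans ?_
  rw [Fintype.card_fin]
  calc _ ≤ exp (n₁ * (1 + log (n / n₁))) * exp (n₂ * (1 + log (n / n₂))) *
        (2 * exp (n₁ * n₂ * σ ^ 2 * (exp c - 1 - c) - c * (2 * (n₁ + n₂) * σ * √n))) := by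
        gcongr ?_ * ?_ * _ <;> exact cast_choose_le_exp _ _
    _ = exp (n₁ * (1 + log (n / n₁)) + n₂ * (1 + log (n / n₂)) + log 2 +
          (n₁ * n₂ * σ ^ 2 * (exp c - 1 - c) - c * (2 * (n₁ + n₂) * σ * √n))) := by
        rw [exp_add, exp_add, exp_add, exp_log two_pos]
        ring
    _ ≤ _ := by
        gcongr
        linarith

/-- Let `n₁ ≤ 10⁻⁶ n` and `10⁻⁶ n ≤ n₂ ≤ n`, and let `M` be a random
`n×n` matrix with mutually independent entries, each of mean `0`, variance `≤ σ²` where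
`σ ≥ 20/√n`, and a.s. bounded in `[−1,1]`. Then with probability at least
`1 − exp(−8(n₁ + 10⁻⁶n)·log(n/n₁ + 10⁶))`, simultaneously for all `S, T ⊆ [n]` with
`|S| = n₁`, `|T| = n₂`: `|∑_{i∈S}∑_{j∈T} M_{ij}| ≤ 2(n₁ + n₂)σ√n`. -/
theorem stmt_11 {Ω : Type*} [MeasurableSpace Ω] (μ : Measure Ω) [IsProbabilityMeasure μ]
    (n n₁ n₂ : ℕ) (hn : 0 < n) (hn₁pos : 0 < n₁) (hn₂pos : 0 < n₂)
    (hn₁ : (n₁ : ℝ) ≤ (n : ℝ) / 1000000)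
    (hn₂lo : (n : ℝ) / 1000000 ≤ (n₂ : ℝ)) (hn₂hi : n₂ ≤ n)
    (σ : ℝ) (hσ : 20 / Real.sqrt n ≤ σ)
    (M : Fin n × Fin n → Ω → ℝ)
    (hmeas : ∀ p, Measurable (M p))
    (hindep : iIndepFun (m := fun _ : Fin n × Fin n => (inferInstance : MeasurableSpace ℝ)) M μ)
    (hmean : ∀ p, ∫ ω, M p ω ∂μ = 0)
    (hvar : ∀ p, ∫ ω, (M p ω) ^ 2 ∂μ ≤ σ ^ 2)
    (hbdd : ∀ p, ∀ᵐ ω ∂μ, |M p ω| ≤ 1) :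
    ENNReal.ofReal
        (1 - Real.exp (-8 * ((n₁ : ℝ) + (n : ℝ) / 1000000) *
          Real.log ((n : ℝ) / n₁ + 1000000))) ≤
      μ {ω | ∀ S T : Finset (Fin n), S.card = n₁ → T.card = n₂ →
        |∑ i ∈ S, ∑ j ∈ T, M (i, j) ω| ≤ 2 * ((n₁ : ℝ) + n₂) * σ * Real.sqrt n} :=
  stmt_11_general μ n n₁ n₂ hn₁pos hn₁ hn₂lo σ hσ M hmeas hindep hmean hvar hbdd
end

section
/- Let Y⁽¹⁾, Y⁽²⁾ be real n×n matrices, let x⁽¹⁾, x⁽²⁾ ∈ {−1, +1}ⁿ, and let s ∈ {0,1}ⁿ. Suppose Y⁽¹⁾ ⊙ (𝟙 − s)(𝟙 − s)ᵀ = Y⁽²⁾ ⊙ (𝟙 − s)(𝟙 − s)ᵀ. Define v := (𝟙 − x⁽¹⁾ ⊙ x⁽²⁾)/2, w := v ⊙ (𝟙 − s), and g := 𝟙 − (𝟙 − v) ⊙ (𝟙 − s). Then ⟨Y⁽¹⁾·(x⁽¹⁾ ⊙ (𝟙 − g)), x⁽¹⁾ ⊙ w⟩ = −⟨Y⁽²⁾·(x⁽²⁾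 ⊙ (𝟙 − g)), x⁽²⁾ ⊙ w⟩. -/
set_option autoImplicit false
set_option maxHeartbeats 1000000

open Matrix

/-- Let `Y⁽¹⁾, Y⁽²⁾` be real `n×n` matrices agreeing on the block
indexed by `{i : s i = 0}`, i.e. `Y⁽¹⁾ ⊙ (𝟙−s)(𝟙−s)ᵀ = Y⁽²⁾ ⊙ (𝟙−s)(𝟙−s)ᵀ`, let
`x⁽¹⁾, x⁽²⁾ ∈ {±1}ⁿ`, `s ∈ {0,1}ⁿ`, `v := (𝟙 − x⁽¹⁾ ⊙ x⁽²⁾)/2`, `w := v ⊙ (𝟙 − s)`,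
`g := 𝟙 − (𝟙 − v) ⊙ (𝟙 − s)`. Then
`⟨Y⁽¹⁾(x⁽¹⁾ ⊙ (𝟙 − g)), x⁽¹⁾ ⊙ w⟩ = −⟨Y⁽²⁾(x⁽²⁾ ⊙ (𝟙 − g)), x⁽²⁾ ⊙ w⟩`. -/
theorem stmt_13 (n : ℕ) (Y₁ Y₂ : Matrix (Fin n) (Fin n) ℝ)
    (x₁ x₂ s : Fin n → ℝ)
    (hx₁ : ∀ i, x₁ i = 1 ∨ x₁ i = -1) (hx₂ : ∀ i, x₂ i = 1 ∨ x₂ i = -1)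
    (hs : ∀ i, s i = 0 ∨ s i = 1)
    (hagree : ∀ i j, Y₁ i j * ((1 - s i) * (1 - s j)) = Y₂ i j * ((1 - s i) * (1 - s j)))
    (v w g : Fin n → ℝ)
    (hv : ∀ i, v i = (1 - x₁ i * x₂ i) / 2)
    (hw : ∀ i, w i = v i * (1 - s i))
    (hg : ∀ i, g i = 1 - (1 - v i) * (1 - s i)) :
    (Y₁.mulVec (fun i => x₁ i * (1 - g i))) ⬝ᵥ (fun i => x₁ i * w i) =
      -((Y₂.mulVec (fun i => x₂ i * (1 - g i))) ⬝ᵥ (fun i => x₂ i * w i)) := by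
  have key : ∀ i j : Fin n,
      Y₁ i j * (x₁ j * (1 - g j)) * (x₁ i * w i) =
        -(Y₂ i j * (x₂ j * (1 - g j)) * (x₂ i * w i)) := by
    intro i j
    have h := hagree i j
    rcases hx₁ i with h1 | h1 <;> rcases hx₂ i with h2 | h2 <;>
      rcases hx₁ j with h3 | h3 <;> rcases hx₂ j with h4 | h4 <;>
      rcases hs i with h5 | h5 <;> rcases hs j with h6 | h6 <;>
      simp only [hw, hg, hv, h1, h2, h3, h4, h5, h6] at h ⊢ <;> nlinarith [h]
  simp only [dotProduct, mulVec, Finset.sum_mul, ← Finset.sum_neg_distrib]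
  exact Finset.sum_congr rfl fun i _ => Finset.sum_congr rfl fun j _ => key i j
end

section
/- Let x, x′ ∈ {−1, +1}ⁿ, let M be a real n×n matrix, and let λ ≥ 0. Suppose the operator norms satisfy ‖M − x xᵀ‖ ≤ λ·n and ‖M − x′ (x′)ᵀ‖ ≤ λ·n. Then n² − ⟨x, x′⟩² ≤ 2·λ·n². -/
set_option autoImplicit false

open Matrix

/-! The difference `x' x'ᵀ - x xᵀ` of the two rank-one matrices has operator norm at most `2λn`
by the triangle inequality through `M`. Its quadratic form at `x'` is `n² - ⟨x, x'⟩²`, while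
`‖x'‖² = n`, so `n² - ⟨x, x'⟩² ≤ 2λn · n`. -/

variable {ι : Type*} [Fintype ι]

theorem Matrix.dotProduct_vecMulVec_self_mulVec {R : Type*} [CommSemiring R] (u v : ι → R) :
    v ⬝ᵥ (vecMulVec u u *ᵥ v) = (u ⬝ᵥ v) ^ 2 := by
  rw [vecMulVec_mulVec, op_smul_eq_smul, dotProduct_smul, smul_eq_mul, dotProduct_comm v u, sq]

theorem Matrix.dotProduct_self_eq_card_of_sign {x : ι → ℝ} (hx : ∀ i, x i = 1 ∨ x i = -1) :
    x ⬝ᵥ x = Fintype.card ι := by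
  have hsq : ∀ i, x i * x i = 1 := fun i => by rcases hx i with h | h <;> simp [h]
  simp [dotProduct, hsq]

theorem Matrix.dotProduct_mulVec_le_norm_toEuclideanCLM [DecidableEq ι] (A : Matrix ι ι ℝ)
    (v : ι → ℝ) :
    v ⬝ᵥ (A *ᵥ v) ≤ ‖toEuclideanCLM (𝕜 := ℝ) A‖ * (v ⬝ᵥ v) := by
  set w : EuclideanSpace ℝ ι := WithLp.toLp 2 v
  have hinner : ∀ u : ι → ℝ, inner ℝ w (WithLp.toLp 2 u) = v ⬝ᵥ u := fun u => by
    simp [w, EuclideanSpace.inner_eq_star_dotProduct, dotProduct_comm]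
  have hnorm : ‖w‖ ^ 2 = v ⬝ᵥ v := by rw [← real_inner_self_eq_norm_sq, hinner]
  calc v ⬝ᵥ (A *ᵥ v) = inner ℝ w (toEuclideanCLM (𝕜 := ℝ) A w) := by
        rw [toEuclideanCLM_toLp, hinner]
    _ ≤ ‖w‖ * ‖toEuclideanCLM (𝕜 := ℝ) A w‖ := real_inner_le_norm _ _
    _ ≤ ‖w‖ * (‖toEuclideanCLM (𝕜 := ℝ) A‖ * ‖w‖) := by
        gcongr; exact ContinuousLinearMap.le_opNorm _ _
    _ = ‖toEuclideanCLM (𝕜 := ℝ) A‖ * (v ⬝ᵥ v) := by rw [← hnorm]; ring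

theorem stmt_14_general (n : ℕ) (x x' : Fin n → ℝ)
    (hx' : ∀ i, x' i = 1 ∨ x' i = -1)
    (M : Matrix (Fin n) (Fin n) ℝ) (lam : ℝ)
    (h1 : ‖Matrix.toEuclideanCLM (𝕜 := ℝ) (M - vecMulVec x x)‖ ≤ lam * n)
    (h2 : ‖Matrix.toEuclideanCLM (𝕜 := ℝ) (M - vecMulVec x' x')‖ ≤ lam * n) :
    (n : ℝ) ^ 2 - (∑ i, x i * x' i) ^ 2 ≤ 2 * lam * n ^ 2 := by
  set A := vecMulVec x' x' - vecMulVec x x with hA_def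
  have hA : ‖toEuclideanCLM (𝕜 := ℝ) A‖ ≤ 2 * lam * n := by
    rw [hA_def, ← sub_sub_sub_cancel_left _ _ M, map_sub]
    linarith [norm_sub_le (toEuclideanCLM (𝕜 := ℝ) (M - vecMulVec x x))
      (toEuclideanCLM (𝕜 := ℝ) (M - vecMulVec x' x'))]
  have hquad := dotProduct_mulVec_le_norm_toEuclideanCLM A x'
  rw [sub_mulVec, dotProduct_sub, dotProduct_vecMulVec_self_mulVec,
    dotProduct_vecMulVec_self_mulVec, dotProduct_self_eq_card_of_sign hx', Fintype.card_fin]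
    at hquad
  calc (n : ℝ) ^ 2 - (∑ i, x i * x' i) ^ 2 ≤ ‖toEuclideanCLM (𝕜 := ℝ) A‖ * n := hquad
    _ ≤ 2 * lam * n * n := by gcongr
    _ = 2 * lam * n ^ 2 := by ring

/-- Let `x, x' ∈ {±1}ⁿ`, `M` a real `n×n` matrix, `λ ≥ 0`. If the
spectral (ℓ²-operator) norms satisfy `‖M − xxᵀ‖ ≤ λn` and `‖M − x'(x')ᵀ‖ ≤ λn`, then
`n² − ⟨x, x'⟩² ≤ 2λn²`. -/
theorem stmt_14 (n : ℕ) (x x' : Fin n → ℝ)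
    (hx : ∀ i, x i = 1 ∨ x i = -1) (hx' : ∀ i, x' i = 1 ∨ x' i = -1)
    (M : Matrix (Fin n) (Fin n) ℝ) (lam : ℝ) (hlam : 0 ≤ lam)
    (h1 : ‖Matrix.toEuclideanCLM (𝕜 := ℝ) (M - vecMulVec x x)‖ ≤ lam * n)
    (h2 : ‖Matrix.toEuclideanCLM (𝕜 := ℝ) (M - vecMulVec x' x')‖ ≤ lam * n) :
    (n : ℝ) ^ 2 - (∑ i, x i * x' i) ^ 2 ≤ 2 * lam * n ^ 2 :=
  stmt_14_general n x x' hx' M lam h1 h2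
end

section
/- Let x, x′ ∈ {−1, +1}ⁿ and define z ∈ {0,1}ⁿ by z_i := (x_i − x′_i)²/4. Let G be a real n×n matrix and let ε, d > 0 and λ, β, γ ∈ ℝ with γ < 1 and λ < 1 − γ. Suppose: (i) the operator norm of E := (n/(ε·d))·G − x xᵀ satisfies ‖E‖ ≤ λ·n; (ii) ⟨z ⊙ x, G·x⟩ ≥ (1−γ)·ε·d·(∑_i z_i − β·n) and ⟨z ⊙ x′, G·x′⟩ ≥ (1−γ)·ε·d·(∑_i z_i − β·n). Then (1 − γ − λ)·∑_i z_i ≤ (1−γ)·β·n + (∑_i z_i)²/n. -/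
/-!
Put `w := z ⊙ x`. Since `x' = x − 2w` and `z ⊙ x' = −w`, adding the two majority bounds gives
`⟨w, Gw⟩ ≥ (1−γ)εd(∑ zᵢ − βn)`. On the other hand `⟨w, x⟩ = ⟨w, w⟩ = ∑ zᵢ`, so
`(n/(εd))⟨w, Gw⟩ = ⟨w, Ew⟩ + (∑ zᵢ)² ≤ λn ∑ zᵢ + (∑ zᵢ)²`; comparing the two bounds and dividing
by `n` gives the claim.
-/

set_option autoImplicit false

open Matrix

lemma dotProduct_mulVec_self_le_opNorm_mul {ι : Type*} [Fintype ι] [DecidableEq ι]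
    (A : Matrix ι ι ℝ) (v : ι → ℝ) :
    v ⬝ᵥ A *ᵥ v ≤ ‖toEuclideanCLM (𝕜 := ℝ) A‖ * (v ⬝ᵥ v) := by
  set u : EuclideanSpace ℝ ι := WithLp.toLp 2 v
  have hinner : v ⬝ᵥ A *ᵥ v = inner ℝ u (toEuclideanCLM (𝕜 := ℝ) A u) := by
    simp [u, EuclideanSpace.inner_toLp_toLp, dotProduct_comm]
  have hnorm : v ⬝ᵥ v = ‖u‖ ^ 2 := by
    rw [← real_inner_self_eq_norm_sq, EuclideanSpace.inner_toLp_toLp, star_trivial]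
  rw [hinner, hnorm]
  calc _ ≤ ‖u‖ * ‖toEuclideanCLM (𝕜 := ℝ) A u‖ := real_inner_le_norm _ _
    _ ≤ ‖u‖ * (‖toEuclideanCLM (𝕜 := ℝ) A‖ * ‖u‖) := by
      gcongr
      exact ContinuousLinearMap.le_opNorm _ _
    _ = _ := by ring

lemma dotProduct_smul_sub_vecMulVec_mulVec_self {ι R : Type*} [Fintype ι] [CommRing R]
    (t : R) (G : Matrix ι ι R) (x v : ι → R) :
    v ⬝ᵥ (t • G - vecMulVec x x) *ᵥ v = t * (v ⬝ᵥ G *ᵥ v) - (v ⬝ᵥ x) ^ 2 := by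
  simp [sub_mulVec, smul_mulVec, dotProduct_smul, smul_eq_mul, vecMulVec_mulVec, dotProduct_sub,
    dotProduct_comm x v, sq]

def IsSignVector {ι : Type*} (x : ι → ℝ) : Prop := ∀ i, x i = 1 ∨ x i = -1

namespace IsSignVector

variable {ι : Type*} {x x' z : ι → ℝ}

lemma dotProduct_mul_self [Fintype ι] (hx : IsSignVector x) (z : ι → ℝ) :
    (z * x) ⬝ᵥ x = ∑ i, z i :=
  Finset.sum_congr rfl fun i _ => by rcases hx i with h | h <;> simp [h]

lemma mul_right_eq_neg_mul_left (hx : IsSignVector x) (hx' : IsSignVector x')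
    (hz : ∀ i, z i = (x i - x' i) ^ 2 / 4) : z * x' = -(z * x) := by
  ext i
  rcases hx i with h | h <;> rcases hx' i with h' | h' <;> norm_num [hz i, h, h']

lemma eq_sub_two_smul (hx : IsSignVector x) (hx' : IsSignVector x')
    (hz : ∀ i, z i = (x i - x' i) ^ 2 / 4) : x' = x - (2 : ℝ) • (z * x) := by
  ext i
  rcases hx i with h | h <;> rcases hx' i with h' | h' <;> norm_num [hz i, h, h']

lemma mul_dotProduct_mulVec_add_mul_dotProduct_mulVec [Fintype ι] (hx : IsSignVector x)
    (hx' : IsSignVector x') (hz : ∀ i, z i = (x i - x' i) ^ 2 / 4) (G : Matrix ι ι ℝ) :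
    (z * x) ⬝ᵥ G *ᵥ x + (z * x') ⬝ᵥ G *ᵥ x' = 2 * ((z * x) ⬝ᵥ G *ᵥ (z * x)) := by
  rw [mul_right_eq_neg_mul_left hx hx' hz, eq_sub_two_smul hx hx' hz]
  simp only [mulVec_sub, mulVec_smul, dotProduct_sub, dotProduct_smul, neg_dotProduct,
    smul_eq_mul]
  ring

lemma dotProduct_mul_mul_self [Fintype ι] (hx : IsSignVector x) (hx' : IsSignVector x')
    (hz : ∀ i, z i = (x i - x' i) ^ 2 / 4) : (z * x) ⬝ᵥ (z * x) = ∑ i, z i :=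
  Finset.sum_congr rfl fun i _ => by
    rcases hx i with h | h <;> rcases hx' i with h' | h' <;> norm_num [hz i, h, h']

end IsSignVector

theorem stmt_16_general (n : ℕ) (x x' : Fin n → ℝ)
    (hx : ∀ i, x i = 1 ∨ x i = -1) (hx' : ∀ i, x' i = 1 ∨ x' i = -1)
    (z : Fin n → ℝ) (hz : ∀ i, z i = (x i - x' i) ^ 2 / 4)
    (G : Matrix (Fin n) (Fin n) ℝ) (ε d lam β γ : ℝ)
    (hε : 0 < ε) (hd : 0 < d)
    (hE : ‖Matrix.toEuclideanCLM (𝕜 := ℝ)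
        (((n : ℝ) / (ε * d)) • G - vecMulVec x x)‖ ≤ lam * n)
    (hmaj : (1 - γ) * ε * d * ((∑ i, z i) - β * n) ≤ (fun i => z i * x i) ⬝ᵥ G.mulVec x)
    (hmaj' : (1 - γ) * ε * d * ((∑ i, z i) - β * n) ≤ (fun i => z i * x' i) ⬝ᵥ G.mulVec x') :
    (1 - γ - lam) * (∑ i, z i) ≤ (1 - γ) * β * n + (∑ i, z i) ^ 2 / n := by
  rcases Nat.eq_zero_or_pos n with rfl | hn
  · simp
  set s := ∑ i, z i
  have hs : 0 ≤ s := Finset.sum_nonneg fun i _ => hz i ▸ by positivity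
  have hGw : (1 - γ) * ε * d * (s - β * n) ≤ (z * x) ⬝ᵥ G *ᵥ (z * x) := by
    change _ ≤ (z * x) ⬝ᵥ G *ᵥ x at hmaj
    change _ ≤ (z * x') ⬝ᵥ G *ᵥ x' at hmaj'
    linarith [IsSignVector.mul_dotProduct_mulVec_add_mul_dotProduct_mulVec hx hx' hz G]
  have hEw : (n / (ε * d)) * ((z * x) ⬝ᵥ G *ᵥ (z * x)) - s ^ 2 ≤ lam * n * s := by
    have h :=
      dotProduct_mulVec_self_le_opNorm_mul (((n : ℝ) / (ε * d)) • G - vecMulVec x x) (z * x)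
    rw [dotProduct_smul_sub_vecMulVec_mulVec_self, IsSignVector.dotProduct_mul_self hx,
      IsSignVector.dotProduct_mul_mul_self hx hx' hz] at h
    exact h.trans (mul_le_mul_of_nonneg_right hE hs)
  have hnR : (0 : ℝ) < n := by exact_mod_cast hn
  have hεd : 0 < ε * d := mul_pos hε hd
  have hcompare : n * ((1 - γ) * (s - β * n)) ≤ lam * n * s + s ^ 2 := by
    have hscale : (n : ℝ) / (ε * d) * ((1 - γ) * ε * d * (s - β * n)) =
        n * ((1 - γ) * (s - β * n)) := by
      field_simp
    linarith [mul_le_mul_of_nonneg_left hGw (div_nonneg hnR.le hεd.le)]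
  rw [← mul_le_mul_iff_of_pos_left hnR]
  field_simp
  linarith

/-- Let `x, x' ∈ {±1}ⁿ`, `z_i := (x_i − x'_i)²/4`, `G` a real `n×n`
matrix, `ε, d > 0`, `γ < 1`, `λ < 1 − γ`. If the spectral norm of
`E := (n/(εd))G − xxᵀ` satisfies `‖E‖ ≤ λn`, and the majority-voting bounds
`⟨z ⊙ x, Gx⟩ ≥ (1−γ)εd(∑ᵢ zᵢ − βn)` and `⟨z ⊙ x', Gx'⟩ ≥ (1−γ)εd(∑ᵢ zᵢ − βn)` hold,
then `(1 − γ − λ)∑ᵢ zᵢ ≤ (1−γ)βn + (∑ᵢ zᵢ)²/n`. -/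
theorem stmt_16 (n : ℕ) (x x' : Fin n → ℝ)
    (hx : ∀ i, x i = 1 ∨ x i = -1) (hx' : ∀ i, x' i = 1 ∨ x' i = -1)
    (z : Fin n → ℝ) (hz : ∀ i, z i = (x i - x' i) ^ 2 / 4)
    (G : Matrix (Fin n) (Fin n) ℝ) (ε d lam β γ : ℝ)
    (hε : 0 < ε) (hd : 0 < d) (hγ : γ < 1) (hlam : lam < 1 - γ)
    (hE : ‖Matrix.toEuclideanCLM (𝕜 := ℝ)
        (((n : ℝ) / (ε * d)) • G - vecMulVec x x)‖ ≤ lam * n)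
    (hmaj : (1 - γ) * ε * d * ((∑ i, z i) - β * n) ≤ (fun i => z i * x i) ⬝ᵥ G.mulVec x)
    (hmaj' : (1 - γ) * ε * d * ((∑ i, z i) - β * n) ≤ (fun i => z i * x' i) ⬝ᵥ G.mulVec x') :
    (1 - γ - lam) * (∑ i, z i) ≤ (1 - γ) * β * n + (∑ i, z i) ^ 2 / n :=
  stmt_16_general n x x' hx hx' z hz G ε d lam β γ hε hd hE hmaj hmaj'
end

section
/- Let n, k be positive integers with k even, let δ ≥ 0, and let Z⁽¹⁾, Z⁽²⁾, Z_init ∈ {0,1}^{n×k}. For t ∈ {1,2}, define x⁽ᵗ⁾ := 2·∑_{a=1}^{k/2} Z⁽ᵗ⁾(·,a) − 𝟙 ∈ ℝⁿ. Let ξ⁽¹⁾, ξ⁽²⁾ ∈ {0,1}ⁿ. Assume: (i) ‖Z⁽ᵗ⁾(·,a) − Z_init(·,a)‖² ≤ 0.001·n/k for every a ∈ {1,…,k/2} and t ∈ {1,2}; (ii) ‖∑_{a=1}^{k/2} Z⁽ᵗ⁾(·,a) − ∑_{a=1}^{k/2} Z_init(·,a)‖² ≤ 0.001·n for t ∈ {1,2};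 (iii) ∑_i ξ⁽ᵗ⁾_i ≤ δ·n for t ∈ {1,2}. Define v := (𝟙 − x⁽¹⁾ ⊙ x⁽²⁾)/2, s := 𝟙 − (𝟙 − ξ⁽¹⁾) ⊙ (𝟙 − ξ⁽²⁾), and w := v ⊙ (𝟙 − s). Then: (a) ‖v‖² ≤ 0.004·n; (b) ‖s‖² ≤ 2·δ·n; (c) ‖w‖² ≤ 0.004·n; and (d) ⟨Z⁽ᵗ⁾(·,b), w⟩ ≤ 0.004·n/k for every b ∈ {1,…,k/2} and t ∈ {1,2}. -/
/-!
Since every row of `Z⁽ᵗ⁾` has a single `1`, the half-sum `S⁽ᵗ⁾ = ∑_{a<k/2} Z⁽ᵗ⁾(·,a)` is a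
`0/1` vector and `v = |S⁽¹⁾ - S⁽²⁾|` marks the vertices on which the two bisections disagree.
Both (a) and (d) then follow from `(p - q)² ≤ 2(p - r)² + 2(q - r)²`, comparing each side with
`Z_init`: for (d) one checks that `Z⁽ᵗ⁾(i,b) wᵢ ≤ (Z⁽¹⁾(i,b) - Z⁽²⁾(i,b))²`, because when both
entries are `1` the vertex lies on the same side of both bisections and `wᵢ = 0`.
-/

open Finset

section ZeroOne

variable {p q : ℝ}

lemma nonneg_of_eq_zero_or_one (hp : p = 0 ∨ p = 1) : 0 ≤ p := by
  rcases hp with rfl | rfl <;> norm_num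

lemma one_sub_mul_div_two_eq_abs_sub (hp : p = 0 ∨ p = 1) (hq : q = 0 ∨ q = 1) :
    (1 - (2 * p - 1) * (2 * q - 1)) / 2 = |p - q| := by
  rcases hp with rfl | rfl <;> rcases hq with rfl | rfl <;> norm_num

lemma abs_sub_le_one (hp : p = 0 ∨ p = 1) (hq : q = 0 ∨ q = 1) : |p - q| ≤ 1 := by
  rcases hp with rfl | rfl <;> rcases hq with rfl | rfl <;> norm_num

lemma one_sub_mul_one_sub_mem_Icc (hp : p = 0 ∨ p = 1) (hq : q = 0 ∨ q = 1) :
    (1 - p) * (1 - q) ∈ Set.Icc (0 : ℝ) 1 := by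
  rcases hp with rfl | rfl <;> rcases hq with rfl | rfl <;> norm_num

lemma sq_one_sub_mul_one_sub_le (hp : p = 0 ∨ p = 1) (hq : q = 0 ∨ q = 1) :
    (1 - (1 - p) * (1 - q)) ^ 2 ≤ p + q := by
  rcases hp with rfl | rfl <;> rcases hq with rfl | rfl <;> norm_num

lemma mul_le_sq_sub_of_eq_zero_or_one {w : ℝ} (hp : p = 0 ∨ p = 1) (hq : q = 0 ∨ q = 1)
    (hw : w ≤ 1) (hpq : p = 1 → q = 1 → w = 0) : p * w ≤ (p - q) ^ 2 := by
  rcases hp with rfl | rfl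
  · simp [sq_nonneg]
  · rcases hq with rfl | rfl
    · norm_num [hw]
    · norm_num [hpq rfl rfl]

end ZeroOne

section RowSums

variable {ι : Type*} [Fintype ι] {z : ι → ℝ}

lemma sum_eq_one_of_mem_of_eq_one (hz : ∀ a, 0 ≤ z a) (hsum : ∑ a, z a = 1)
    {T : Finset ι} {a : ι} (ha : a ∈ T) (ha1 : z a = 1) : ∑ b ∈ T, z b = 1 :=
  le_antisymm (hsum ▸ sum_le_sum_of_subset_of_nonneg (subset_univ T) fun b _ _ => hz b)
    (ha1 ▸ single_le_sum (fun b _ => hz b) ha)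

lemma sum_eq_zero_or_one_of_sum_eq_one (hz : ∀ a, z a = 0 ∨ z a = 1) (hsum : ∑ a, z a = 1)
    (T : Finset ι) : ∑ a ∈ T, z a = 0 ∨ ∑ a ∈ T, z a = 1 := by
  by_cases h : ∃ a ∈ T, z a = 1
  · obtain ⟨a, ha, ha1⟩ := h
    exact Or.inr <|
      sum_eq_one_of_mem_of_eq_one (fun b => nonneg_of_eq_zero_or_one (hz b)) hsum ha ha1
  · push Not at h
    exact Or.inl (sum_eq_zero fun a ha => (hz a).resolve_right (h a ha))

end RowSums

lemma sum_sq_sub_le {ι : Type*} [Fintype ι] (f g h : ι → ℝ) :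
    ∑ i, (f i - g i) ^ 2 ≤ 2 * ∑ i, (f i - h i) ^ 2 + 2 * ∑ i, (g i - h i) ^ 2 := by
  simp only [mul_sum, ← sum_add_distrib, ← mul_add]
  refine sum_le_sum fun i _ => ?_
  have := add_sq_le (a := f i - h i) (b := h i - g i)
  rwa [sub_add_sub_cancel, sub_sq_comm (h i)] at this

lemma sum_mul_le_sum_sq_sub {ι : Type*} [Fintype ι] {p q w : ι → ℝ}
    (hp : ∀ i, p i = 0 ∨ p i = 1) (hq : ∀ i, q i = 0 ∨ q i = 1) (hw : ∀ i, w i ≤ 1)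
    (hpq : ∀ i, p i = 1 → q i = 1 → w i = 0) : ∑ i, p i * w i ≤ ∑ i, (p i - q i) ^ 2 :=
  sum_le_sum fun i _ => mul_le_sq_sub_of_eq_zero_or_one (hp i) (hq i) (hw i) (hpq i)

lemma sq_mul_le_sq {v t : ℝ} (ht : t ∈ Set.Icc (0 : ℝ) 1) : (v * t) ^ 2 ≤ v ^ 2 := by
  rw [mul_pow]
  exact mul_le_of_le_one_right (sq_nonneg v) (pow_le_one₀ ht.1 ht.2)

theorem stmt_18_general (n k : ℕ)
    (δ : ℝ)
    (Z₁ Z₂ Zinit : Fin n → Fin k → ℝ)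
    (hZ₁01 : ∀ i a, Z₁ i a = 0 ∨ Z₁ i a = 1)
    (hZ₂01 : ∀ i a, Z₂ i a = 0 ∨ Z₂ i a = 1)
    (hrow₁ : ∀ i, ∑ a, Z₁ i a = 1) (hrow₂ : ∀ i, ∑ a, Z₂ i a = 1)
    (ξ₁ ξ₂ : Fin n → ℝ)
    (hξ₁01 : ∀ i, ξ₁ i = 0 ∨ ξ₁ i = 1) (hξ₂01 : ∀ i, ξ₂ i = 0 ∨ ξ₂ i = 1)
    (x₁ x₂ : Fin n → ℝ)
    (hx₁ : ∀ i, x₁ i =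
      2 * (∑ a ∈ Finset.univ.filter (fun a : Fin k => (a : ℕ) < k / 2), Z₁ i a) - 1)
    (hx₂ : ∀ i, x₂ i =
      2 * (∑ a ∈ Finset.univ.filter (fun a : Fin k => (a : ℕ) < k / 2), Z₂ i a) - 1)
    (hcol₁ : ∀ a : Fin k, (a : ℕ) < k / 2 →
      ∑ i, (Z₁ i a - Zinit i a) ^ 2 ≤ 0.001 * n / k)
    (hcol₂ : ∀ a : Fin k, (a : ℕ) < k / 2 →
      ∑ i, (Z₂ i a - Zinit i a) ^ 2 ≤ 0.001 * n / k)
    (hsum₁ : ∑ i, ((∑ a ∈ Finset.univ.filter (fun a : Fin k => (a : ℕ) < k / 2), Z₁ i a)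
      - ∑ a ∈ Finset.univ.filter (fun a : Fin k => (a : ℕ) < k / 2), Zinit i a) ^ 2
      ≤ 0.001 * n)
    (hsum₂ : ∑ i, ((∑ a ∈ Finset.univ.filter (fun a : Fin k => (a : ℕ) < k / 2), Z₂ i a)
      - ∑ a ∈ Finset.univ.filter (fun a : Fin k => (a : ℕ) < k / 2), Zinit i a) ^ 2
      ≤ 0.001 * n)
    (hξsum₁ : ∑ i, ξ₁ i ≤ δ * n) (hξsum₂ : ∑ i, ξ₂ i ≤ δ * n)
    (v s w : Fin n → ℝ)
    (hv : ∀ i, v i = (1 - x₁ i * x₂ i) / 2)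
    (hs : ∀ i, s i = 1 - (1 - ξ₁ i) * (1 - ξ₂ i))
    (hw : ∀ i, w i = v i * (1 - s i)) :
    (∑ i, (v i) ^ 2 ≤ 0.004 * n) ∧
      (∑ i, (s i) ^ 2 ≤ 2 * δ * n) ∧
      (∑ i, (w i) ^ 2 ≤ 0.004 * n) ∧
      (∀ b : Fin k, (b : ℕ) < k / 2 →
        (∑ i, Z₁ i b * w i ≤ 0.004 * n / k) ∧ (∑ i, Z₂ i b * w i ≤ 0.004 * n / k)) := by
  set T := univ.filter (fun a : Fin k => (a : ℕ) < k / 2)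
  have hS₁ i := sum_eq_zero_or_one_of_sum_eq_one (hZ₁01 i) (hrow₁ i) T
  have hS₂ i := sum_eq_zero_or_one_of_sum_eq_one (hZ₂01 i) (hrow₂ i) T
  have hv_abs i : v i = |∑ a ∈ T, Z₁ i a - ∑ a ∈ T, Z₂ i a| := by
    rw [hv, hx₁, hx₂, one_sub_mul_div_two_eq_abs_sub (hS₁ i) (hS₂ i)]
  have hmask i : 1 - s i ∈ Set.Icc (0 : ℝ) 1 := by
    rw [hs, sub_sub_cancel]; exact one_sub_mul_one_sub_mem_Icc (hξ₁01 i) (hξ₂01 i)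
  have hw_le_one i : w i ≤ 1 := by
    rw [hw]
    exact (mul_le_of_le_one_right (hv_abs i ▸ abs_nonneg _) (hmask i).2).trans
      (hv_abs i ▸ abs_sub_le_one (hS₁ i) (hS₂ i))
  have hnorm_v : ∑ i, v i ^ 2 ≤ 0.004 * n := by
    simp only [hv_abs, sq_abs]
    linarith [sum_sq_sub_le (fun i => ∑ a ∈ T, Z₁ i a) (fun i => ∑ a ∈ T, Z₂ i a)
      (fun i => ∑ a ∈ T, Zinit i a)]
  refine ⟨hnorm_v, ?_, ?_, fun b hb => ?_⟩
  · calc ∑ i, s i ^ 2 ≤ ∑ i, (ξ₁ i + ξ₂ i) := sum_le_sum fun i _ => by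
          rw [hs]; exact sq_one_sub_mul_one_sub_le (hξ₁01 i) (hξ₂01 i)
      _ ≤ 2 * δ * n := by rw [sum_add_distrib]; linarith
  · calc ∑ i, w i ^ 2 ≤ ∑ i, v i ^ 2 := sum_le_sum fun i _ => hw i ▸ sq_mul_le_sq (hmask i)
      _ ≤ 0.004 * n := hnorm_v
  · have hbT : b ∈ T := by simp [T, hb]
    have hagree i (h₁ : Z₁ i b = 1) (h₂ : Z₂ i b = 1) : w i = 0 := by
      rw [hw, hv_abs,
        sum_eq_one_of_mem_of_eq_one (nonneg_of_eq_zero_or_one <| hZ₁01 i ·) (hrow₁ i) hbT h₁,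
        sum_eq_one_of_mem_of_eq_one (nonneg_of_eq_zero_or_one <| hZ₂01 i ·) (hrow₂ i) hbT h₂]
      simp
    have hcol := sum_sq_sub_le (Z₁ · b) (Z₂ · b) (Zinit · b)
    have hcol' := sum_sq_sub_le (Z₂ · b) (Z₁ · b) (Zinit · b)
    have hsplit : (0.004 : ℝ) * n / k = 2 * (0.001 * n / k) + 2 * (0.001 * n / k) := by ring
    constructor <;> linarith [hcol₁ b hb, hcol₂ b hb,
      sum_mul_le_sum_sq_sub (hZ₁01 · b) (hZ₂01 · b) hw_le_one hagree,
      sum_mul_le_sum_sq_sub (hZ₂01 · b) (hZ₁01 · b) hw_le_one fun i => flip (hagree i)]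

/-- (Agreement lemma for bisections.) With `Z⁽¹⁾, Z⁽²⁾, Z_init ∈
{0,1}^{n×k}` (rows of `Z⁽¹⁾, Z⁽²⁾` summing to 1), induced bisections
`x⁽ᵗ⁾ = 2∑_{a<k/2} Z⁽ᵗ⁾(·,a) − 𝟙`, masks `ξ⁽ᵗ⁾ ∈ {0,1}ⁿ` of size `≤ δn`, and the
closeness hypotheses (i)–(ii) to `Z_init`, the vectors `v, s, w` satisfy
`‖v‖² ≤ 0.004n`, `‖s‖² ≤ 2δn`, `‖w‖² ≤ 0.004n`, and `⟨Z⁽ᵗ⁾(·,b), w⟩ ≤ 0.004n/k`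
for all `b < k/2` and `t ∈ {1,2}`. -/
theorem stmt_18 (n k : ℕ) (hn : 0 < n) (hk : 0 < k) (hkeven : Even k)
    (δ : ℝ) (hδ : 0 ≤ δ)
    (Z₁ Z₂ Zinit : Fin n → Fin k → ℝ)
    (hZ₁01 : ∀ i a, Z₁ i a = 0 ∨ Z₁ i a = 1)
    (hZ₂01 : ∀ i a, Z₂ i a = 0 ∨ Z₂ i a = 1)
    (hZinit01 : ∀ i a, Zinit i a = 0 ∨ Zinit i a = 1)
    (hrow₁ : ∀ i, ∑ a, Z₁ i a = 1) (hrow₂ : ∀ i, ∑ a, Z₂ i a = 1)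
    (ξ₁ ξ₂ : Fin n → ℝ)
    (hξ₁01 : ∀ i, ξ₁ i = 0 ∨ ξ₁ i = 1) (hξ₂01 : ∀ i, ξ₂ i = 0 ∨ ξ₂ i = 1)
    (x₁ x₂ : Fin n → ℝ)
    (hx₁ : ∀ i, x₁ i =
      2 * (∑ a ∈ Finset.univ.filter (fun a : Fin k => (a : ℕ) < k / 2), Z₁ i a) - 1)
    (hx₂ : ∀ i, x₂ i =
      2 * (∑ a ∈ Finset.univ.filter (fun a : Fin k => (a : ℕ) < k / 2), Z₂ i a) - 1)
    (hcol₁ : ∀ a : Fin k, (a : ℕ) < k / 2 →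
      ∑ i, (Z₁ i a - Zinit i a) ^ 2 ≤ 0.001 * n / k)
    (hcol₂ : ∀ a : Fin k, (a : ℕ) < k / 2 →
      ∑ i, (Z₂ i a - Zinit i a) ^ 2 ≤ 0.001 * n / k)
    (hsum₁ : ∑ i, ((∑ a ∈ Finset.univ.filter (fun a : Fin k => (a : ℕ) < k / 2), Z₁ i a)
      - ∑ a ∈ Finset.univ.filter (fun a : Fin k => (a : ℕ) < k / 2), Zinit i a) ^ 2
      ≤ 0.001 * n)
    (hsum₂ : ∑ i, ((∑ a ∈ Finset.univ.filter (fun a : Fin k => (a : ℕ) < k / 2), Z₂ i a)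
      - ∑ a ∈ Finset.univ.filter (fun a : Fin k => (a : ℕ) < k / 2), Zinit i a) ^ 2
      ≤ 0.001 * n)
    (hξsum₁ : ∑ i, ξ₁ i ≤ δ * n) (hξsum₂ : ∑ i, ξ₂ i ≤ δ * n)
    (v s w : Fin n → ℝ)
    (hv : ∀ i, v i = (1 - x₁ i * x₂ i) / 2)
    (hs : ∀ i, s i = 1 - (1 - ξ₁ i) * (1 - ξ₂ i))
    (hw : ∀ i, w i = v i * (1 - s i)) :
    (∑ i, (v i) ^ 2 ≤ 0.004 * n) ∧
      (∑ i, (s i) ^ 2 ≤ 2 * δ * n) ∧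
      (∑ i, (w i) ^ 2 ≤ 0.004 * n) ∧
      (∀ b : Fin k, (b : ℕ) < k / 2 →
        (∑ i, Z₁ i b * w i ≤ 0.004 * n / k) ∧ (∑ i, Z₂ i b * w i ≤ 0.004 * n / k)) :=
  stmt_18_general n k δ Z₁ Z₂ Zinit hZ₁01 hZ₂01 hrow₁ hrow₂ ξ₁ ξ₂ hξ₁01 hξ₂01 x₁ x₂ hx₁ hx₂ hcol₁
    hcol₂ hsum₁ hsum₂ hξsum₁ hξsum₂ v s w hv hs hw
end

section
/- Let n, k be positive integers with k even, and let Z ∈ {0,1}^{n×k} be a matrix each of whose rows sums to 1. Define X := Z·Zᵀ − (1/k)·J, where J is the n×n all-ones matrix, and x := 2·∑_{a=1}^{k/2} Z(·,a) − 𝟙 ∈ {−1,+1}ⁿ. Let w ∈ ℝⁿ satisfy 0 ≤ w_i ≤ 1 for all i, ∑_i w_i ≤ 0.004·n, and ⟨Z(·,a), w⟩ ≤ 0.004·n/k for every a ∈ {1,…,k/2}. Then for every a ∈ {1,…,k/2}: −(0.004·n/k)·⟨w, Z(·,a)⟩ ≤ ⟨X·(x ⊙ w), x ⊙ w ⊙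 Z(·,a)⟩ ≤ (0.008·n/k)·⟨w, Z(·,a)⟩. -/
/-!
On the support of column `a` we have `x = 1`, and the columns of `Z` have disjoint supports, so
`X (x ⊙ w)` restricted to that support is the constant `S - T / k`, where `S = ⟨w, Z(·,a)⟩` and
`T = ⟨x, w⟩`. The quadratic form is therefore `(S - T / k) * S`, and the bounds follow from
`0 ≤ S ≤ 0.004 n / k` and `|T| ≤ ∑ w ≤ 0.004 n`.
-/

open Matrix Finset

section OneHotRows

variable {ι κ : Type*} [Fintype κ] {Z : ι → κ → ℝ}

lemma mul_apply_eq_ite [DecidableEq κ] (hZ01 : ∀ i a, Z i a = 0 ∨ Z i a = 1)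
    (hrow : ∀ i, ∑ a, Z i a = 1)
    (i : ι) (a b : κ) : Z i b * Z i a = if b = a then Z i a else 0 := by
  have hnonneg : ∀ c, 0 ≤ Z i c := fun c => by rcases hZ01 i c with h | h <;> simp [h]
  split_ifs with hba
  · subst hba
    rcases hZ01 i b with h | h <;> simp [h]
  rcases hZ01 i a with h | h
  · simp [h]
  have hrest : ∑ c ∈ univ.erase a, Z i c = 0 := by
    have := hrow i
    rw [← add_sum_erase _ _ (mem_univ a), h] at this
    linarith
  have hb : Z i b = 0 :=
    (sum_eq_zero_iff_of_nonneg fun c _ => hnonneg c).1 hrest b (mem_erase.2 ⟨hba, mem_univ b⟩)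
  simp [hb]

lemma sum_mul_apply_of_mem (hZ01 : ∀ i a, Z i a = 0 ∨ Z i a = 1) (hrow : ∀ i, ∑ a, Z i a = 1)
    (i : ι) {a : κ} {s : Finset κ} (ha : a ∈ s) : (∑ b ∈ s, Z i b) * Z i a = Z i a := by
  classical
  simp [sum_mul, mul_apply_eq_ite hZ01 hrow, ha]

lemma sum_mul_mul_apply (hZ01 : ∀ i a, Z i a = 0 ∨ Z i a = 1) (hrow : ∀ i, ∑ a, Z i a = 1)
    (i j : ι) (a : κ) : (∑ b, Z i b * Z j b) * Z i a = Z j a * Z i a := by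
  classical
  have hterm : ∀ b, Z i b * Z j b * Z i a = Z j b * (Z i b * Z i a) := fun b => by ring
  simp [sum_mul, hterm, mul_apply_eq_ite hZ01 hrow]

lemma abs_two_mul_sum_sub_one_le (hZ01 : ∀ i a, Z i a = 0 ∨ Z i a = 1)
    (hrow : ∀ i, ∑ a, Z i a = 1) (i : ι) (s : Finset κ) :
    |2 * (∑ b ∈ s, Z i b) - 1| ≤ 1 := by
  have hnonneg : ∀ c, 0 ≤ Z i c := fun c => by rcases hZ01 i c with h | h <;> simp [h]
  have h0 : 0 ≤ ∑ b ∈ s, Z i b := sum_nonneg fun c _ => hnonneg c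
  have h1 : ∑ b ∈ s, Z i b ≤ 1 :=
    hrow i ▸ sum_le_sum_of_subset_of_nonneg (subset_univ s) fun c _ _ => hnonneg c
  rw [abs_le]
  constructor <;> linarith

variable [Fintype ι]

lemma mulVec_apply_mul_apply (hZ01 : ∀ i a, Z i a = 0 ∨ Z i a = 1)
    (hrow : ∀ i, ∑ a, Z i a = 1) {c : ℝ} {X : Matrix ι ι ℝ}
    (hX : ∀ i j, X i j = (∑ b, Z i b * Z j b) - c) (v : ι → ℝ) (i : ι) (a : κ) :
    (X *ᵥ v) i * Z i a = ((∑ j, Z j a * v j) - c * ∑ j, v j) * Z i a := by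
  simp only [mulVec, dotProduct, hX, sum_mul, mul_sum, ← sum_sub_distrib]
  refine sum_congr rfl fun j _ => ?_
  rw [sub_mul, sub_mul, mul_right_comm _ (v j), sum_mul_mul_apply hZ01 hrow]
  ring

theorem mulVec_dotProduct_eq (hZ01 : ∀ i a, Z i a = 0 ∨ Z i a = 1)
    (hrow : ∀ i, ∑ a, Z i a = 1) {c : ℝ} {X : Matrix ι ι ℝ}
    (hX : ∀ i j, X i j = (∑ b, Z i b * Z j b) - c) {x : ι → ℝ} {a : κ}
    (hxZ : ∀ i, x i * Z i a = Z i a) (w : ι → ℝ) :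
    X *ᵥ (fun i => x i * w i) ⬝ᵥ (fun i => x i * w i * Z i a) =
      ((∑ i, w i * Z i a) - c * ∑ i, x i * w i) * ∑ i, w i * Z i a := by
  have hcol : ∑ j, Z j a * (x j * w j) = ∑ j, w j * Z j a :=
    sum_congr rfl fun j _ => by rw [← mul_assoc, mul_comm (Z j a), hxZ, mul_comm]
  rw [dotProduct, mul_sum]
  refine sum_congr rfl fun i _ => ?_
  rw [mul_right_comm (x i), hxZ, ← mul_assoc, mulVec_apply_mul_apply hZ01 hrow hX, hcol]
  ring

end OneHotRows

lemma abs_sum_mul_le_sum {ι : Type*} (s : Finset ι) {x w : ι → ℝ} (hx : ∀ i, |x i| ≤ 1)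
    (hw : ∀ i, 0 ≤ w i) : |∑ i ∈ s, x i * w i| ≤ ∑ i ∈ s, w i :=
  (abs_sum_le_sum_abs _ _).trans <| sum_le_sum fun i _ => by
    rw [abs_mul, abs_of_nonneg (hw i)]
    exact mul_le_of_le_one_left (hw i) (hx i)

lemma neg_mul_le_sub_mul_self_and_le {S t ε : ℝ} (hS0 : 0 ≤ S) (hS : S ≤ ε) (ht : |t| ≤ ε) :
    -ε * S ≤ (S - t) * S ∧ (S - t) * S ≤ 2 * ε * S := by
  rw [abs_le] at ht
  constructor <;> nlinarith

theorem stmt_19_general (n k : ℕ)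
    (Z : Fin n → Fin k → ℝ)
    (hZ01 : ∀ i a, Z i a = 0 ∨ Z i a = 1)
    (hrow : ∀ i, ∑ a, Z i a = 1)
    (X : Matrix (Fin n) (Fin n) ℝ)
    (hX : ∀ i j, X i j = (∑ a, Z i a * Z j a) - 1 / k)
    (x : Fin n → ℝ)
    (hx : ∀ i, x i =
      2 * (∑ a ∈ Finset.univ.filter (fun a : Fin k => (a : ℕ) < k / 2), Z i a) - 1)
    (w : Fin n → ℝ)
    (hw01 : ∀ i, 0 ≤ w i ∧ w i ≤ 1)
    (hwsum : ∑ i, w i ≤ 0.004 * n)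
    (hwZ : ∀ a : Fin k, (a : ℕ) < k / 2 → ∑ i, Z i a * w i ≤ 0.004 * n / k)
    (a : Fin k) (ha : (a : ℕ) < k / 2) :
    -(0.004 * n / k) * (∑ i, w i * Z i a) ≤
        X.mulVec (fun i => x i * w i) ⬝ᵥ (fun i => x i * w i * Z i a) ∧
      X.mulVec (fun i => x i * w i) ⬝ᵥ (fun i => x i * w i * Z i a) ≤
        (0.008 * n / k) * (∑ i, w i * Z i a) := by
  have hw0 : ∀ i, 0 ≤ w i := fun i => (hw01 i).1
  have hxZ : ∀ i, x i * Z i a = Z i a := fun i => by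
    rw [hx, sub_mul, mul_assoc, sum_mul_apply_of_mem hZ01 hrow i (by simpa using ha)]
    ring
  have hxabs : ∀ i, |x i| ≤ 1 := fun i => hx i ▸ abs_two_mul_sum_sub_one_le hZ01 hrow i _
  have hS0 : 0 ≤ ∑ i, w i * Z i a :=
    sum_nonneg fun i _ => mul_nonneg (hw0 i) (by rcases hZ01 i a with h | h <;> simp [h])
  have hS : ∑ i, w i * Z i a ≤ 0.004 * n / k := by simpa only [mul_comm] using hwZ a ha
  have hT : |1 / (k : ℝ) * ∑ i, x i * w i| ≤ 0.004 * n / k := by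
    rw [abs_mul, abs_of_nonneg (by positivity), one_div_mul_eq_div]
    gcongr
    exact (abs_sum_mul_le_sum _ hxabs hw0).trans hwsum
  rw [mulVec_dotProduct_eq hZ01 hrow hX hxZ]
  obtain ⟨hlower, hupper⟩ := neg_mul_le_sub_mul_self_and_le hS0 hS hT
  refine ⟨hlower, hupper.trans_eq ?_⟩
  ring

/-- Let `Z ∈ {0,1}^{n×k}` with rows summing to 1 (`k` even),
`X := ZZᵀ − (1/k)J`, `x := 2∑_{a<k/2} Z(·,a) − 𝟙 ∈ {±1}ⁿ`. If `0 ≤ w ≤ 1`,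
`∑ᵢ wᵢ ≤ 0.004n`, and `⟨Z(·,a), w⟩ ≤ 0.004n/k` for every `a < k/2`, then for every
`a < k/2`:
`−(0.004n/k)⟨w, Z(·,a)⟩ ≤ ⟨X(x ⊙ w), x ⊙ w ⊙ Z(·,a)⟩ ≤ (0.008n/k)⟨w, Z(·,a)⟩`. -/
theorem stmt_19 (n k : ℕ) (hn : 0 < n) (hk : 0 < k) (hkeven : Even k)
    (Z : Fin n → Fin k → ℝ)
    (hZ01 : ∀ i a, Z i a = 0 ∨ Z i a = 1)
    (hrow : ∀ i, ∑ a, Z i a = 1)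
    (X : Matrix (Fin n) (Fin n) ℝ)
    (hX : ∀ i j, X i j = (∑ a, Z i a * Z j a) - 1 / k)
    (x : Fin n → ℝ)
    (hx : ∀ i, x i =
      2 * (∑ a ∈ Finset.univ.filter (fun a : Fin k => (a : ℕ) < k / 2), Z i a) - 1)
    (w : Fin n → ℝ)
    (hw01 : ∀ i, 0 ≤ w i ∧ w i ≤ 1)
    (hwsum : ∑ i, w i ≤ 0.004 * n)
    (hwZ : ∀ a : Fin k, (a : ℕ) < k / 2 → ∑ i, Z i a * w i ≤ 0.004 * n / k)
    (a : Fin k) (ha : (a : ℕ) < k / 2) :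
    -(0.004 * n / k) * (∑ i, w i * Z i a) ≤
        X.mulVec (fun i => x i * w i) ⬝ᵥ (fun i => x i * w i * Z i a) ∧
      X.mulVec (fun i => x i * w i) ⬝ᵥ (fun i => x i * w i * Z i a) ≤
        (0.008 * n / k) * (∑ i, w i * Z i a) :=
  stmt_19_general n k Z hZ01 hrow X hX x hx w hw01 hwsum hwZ a ha
end
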